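/- arXiv:1608.06780 — 9 statements merged into one kernel-verified Lean document; each statement's English description precedes it below -/
import Mathlib

section
/- For every positive integer n, the sum over all permutations σ of {1,…,n} of the monomial x₁^{h_σ(1)} x₂^{h_σ(2)} ⋯ x_n^{h_σ(n)} — where h_σ(j) = 1 if j is the maximum element of its cycle in the cycle decomposition of σ and h_σ(j) = 0 otherwise — equals the polynomial (x₁ + n − 1)(x₂ + n − 2) ⋯ (x_{n−1} + 1) x_n. -/
open scoped Classical

/-- `hExp σ j = 1` if `j` is the maximum element of its cycle in `σ`, and `0` otherwise. -/
noncomputable def hExp {n : ℕ} (σ : Equiv.Perm (Fin n)) (j : Fin n) : ℕ :=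
  if ∀ k : ℕ, (σ ^ k) j ≤ j then 1 else 0

/-!
Removing `0` from the cycle of a permutation `σ` of `{0, …, n}` that contains it leaves a
permutation `e` of `{1, …, n}`; conversely `σ` is recovered from `e` and `p = σ 0`, which is
Mathlib's bijection `Equiv.Perm.decomposeFin`. Since `0` is the smallest element, this does
not change which of `1, …, n` are cycle maxima, while `0` itself is a cycle maximum exactly
when `p = 0`. Hence the generating polynomial for `n + 1` is
`(x₀ + n) ⋅ (generating polynomial of e in x₁, …, xₙ)`, and the product formula follows by
induction on `n`.
-/

open Equiv Equiv.Perm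

theorem Equiv.Perm.exists_pow_apply_eq_map_pow_apply {α β : Type*} (σ : Perm β) (e : Perm α)
    (f : α → β) (hstep : ∀ a, ∃ k : ℕ, (σ ^ k) (f a) = f (e a)) (a : α) (m : ℕ) :
    ∃ k : ℕ, (σ ^ k) (f a) = f ((e ^ m) a) := by
  induction m with
  | zero => exact ⟨0, rfl⟩
  | succ m ih =>
    obtain ⟨k, hk⟩ := ih
    obtain ⟨l, hl⟩ := hstep ((e ^ m) a)
    exact ⟨l + k, by rw [pow_add, mul_apply, hk, hl, pow_succ', mul_apply]⟩

section decomposeFin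

variable {n : ℕ} (p : Fin (n + 1)) (e : Perm (Fin n))

theorem exists_pow_decomposeFin_symm_apply_succ (i : Fin n) :
    ∃ k : ℕ, (decomposeFin.symm (p, e) ^ k) i.succ = (e i).succ := by
  by_cases hp : (e i).succ = p
  · -- `σ` sends `i.succ` to `0` and then `0` to `p`
    refine ⟨2, ?_⟩
    rw [pow_two, mul_apply, decomposeFin_symm_apply_succ, hp, swap_apply_right,
      decomposeFin_symm_apply_zero]
  · refine ⟨1, ?_⟩
    rw [pow_one, decomposeFin_symm_apply_succ,
      swap_apply_of_ne_of_ne (Fin.succ_ne_zero _) hp]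

/-- An invariant set containing the `σ`-orbit of `j.succ`. -/
theorem mapsTo_decomposeFin_symm (j : Fin n) :
    Set.MapsTo (decomposeFin.symm (p, e))
      {z | (∃ m : ℕ, z = ((e ^ m) j).succ) ∨ (z = 0 ∧ ∃ m : ℕ, p = ((e ^ m) j).succ)}
      {z | (∃ m : ℕ, z = ((e ^ m) j).succ) ∨ (z = 0 ∧ ∃ m : ℕ, p = ((e ^ m) j).succ)} := by
  rintro z (⟨m, rfl⟩ | ⟨rfl, m, hm⟩)
  · have hnext : e ((e ^ m) j) = (e ^ (m + 1)) j := by rw [pow_succ', mul_apply]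
    rw [Set.mem_ofPred_eq, decomposeFin_symm_apply_succ, hnext]
    by_cases hp : ((e ^ (m + 1)) j).succ = p
    · exact Or.inr ⟨by rw [hp, swap_apply_right], m + 1, hp.symm⟩
    · exact Or.inl ⟨m + 1, swap_apply_of_ne_of_ne (Fin.succ_ne_zero _) hp⟩
  · exact Or.inl ⟨m, by rw [decomposeFin_symm_apply_zero, hm]⟩

theorem hExp_decomposeFin_symm_succ (j : Fin n) :
    hExp (decomposeFin.symm (p, e)) j.succ = hExp e j := by
  refine if_congr ⟨fun h m => ?_, fun h k => ?_⟩ rfl rfl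
  · obtain ⟨k, hk⟩ :=
      exists_pow_apply_eq_map_pow_apply _ e Fin.succ
        (exists_pow_decomposeFin_symm_apply_succ p e) j m
    simpa [hk] using h k
  · have hmem := (mapsTo_decomposeFin_symm p e j).iterate k
      (Or.inl ⟨0, by rw [pow_zero, one_apply]⟩)
    rw [← coe_pow] at hmem
    rcases hmem with ⟨m, hm⟩ | ⟨h0, -⟩
    · rw [hm, Fin.succ_le_succ_iff]
      exact h m
    · rw [h0]
      exact Fin.zero_le _

theorem hExp_decomposeFin_symm_zero :
    hExp (decomposeFin.symm (p, e)) 0 = if p = 0 then 1 else 0 := by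
  refine if_congr ⟨fun h => ?_, fun hp k => ?_⟩ rfl rfl
  · simpa [Fin.le_zero_iff] using h 1
  · have hfix : decomposeFin.symm (p, e) 0 = 0 := by rw [decomposeFin_symm_apply_zero, hp]
    rw [pow_apply_eq_self_of_apply_eq_self hfix]

theorem prod_pow_hExp_decomposeFin_symm {R : Type*} [CommMonoid R] (x : Fin (n + 1) → R) :
    ∏ j, x j ^ hExp (decomposeFin.symm (p, e)) j
      = (if p = 0 then x 0 else 1) * ∏ j : Fin n, x j.succ ^ hExp e j := by
  simp only [Fin.prod_univ_succ, hExp_decomposeFin_symm_zero, hExp_decomposeFin_symm_succ]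
  split_ifs <;> simp

end decomposeFin

theorem Fin.sum_ite_eq_zero {R : Type*} [AddCommMonoidWithOne R] (n : ℕ) (a : R) :
    ∑ p : Fin (n + 1), (if p = 0 then a else 1) = a + n := by
  simp [Fin.sum_univ_succ, Fin.succ_ne_zero]

theorem stmt0_general (n : ℕ) (x : Fin n → ℂ) :
    ∑ σ : Equiv.Perm (Fin n), ∏ j : Fin n, x j ^ hExp σ j
      = ∏ i : Fin n, (x i + ((n : ℂ) - 1 - ((i : ℕ) : ℂ))) := by
  induction n with
  | zero => simp
  | succ n ih =>
    rw [← decomposeFin.symm.sum_comp, Fintype.sum_prod_type]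
    simp only [prod_pow_hExp_decomposeFin_symm]
    rw [← Finset.sum_mul_sum, Fin.sum_ite_eq_zero, ih, Fin.prod_univ_succ]
    congr 1
    · simp
    · refine Finset.prod_congr rfl fun j _ => ?_
      push_cast [Fin.val_succ]
      ring

/-- The sum over all permutations of the cycle-maxima monomials equals the
`n`-th elementary shifted symmetric polynomial `(x₁+n−1)(x₂+n−2)⋯xₙ`. -/
theorem stmt0 (n : ℕ) (hn : 0 < n) (x : Fin n → ℂ) :
    ∑ σ : Equiv.Perm (Fin n), ∏ j : Fin n, x j ^ hExp σ j
      = ∏ i : Fin n, (x i + ((n : ℂ) - 1 - ((i : ℕ) : ℂ))) :=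
  stmt0_general n x
end

section
/- For every positive integer n and every subset S of {1,…,n} containing n, the number of permutations σ of {1,…,n} whose set of cycle-maxima equals S is ∏_{j ∈ {1,…,n} \ S} (n − j). -/
/-! Write `σ = decomposeFin.symm (p, e)`, so `σ 0 = p` and `σ (i + 1) = swap 0 p (e i + 1)`.
Deleting `0` from its cycle in `σ` leaves `e`, shifted by one, and `0` is a fixed point of `σ`
exactly when `p = 0`. As `0` is the least element, the other cycle-maxima of `σ` are the shifted
cycle-maxima of `e`. So a set `S ∌ 0` of cycle-maxima arises from `m` choices of `p`, and a set
`S ∋ 0` from one, which is the factor at `j = 0` of the product; the rest is induction on `m`. -/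

open scoped Classical
open Equiv Finset

/-- The set of cycle-maxima of a permutation: elements maximal in their cycle. -/
noncomputable def cycleMaxSet {n : ℕ} (σ : Equiv.Perm (Fin n)) : Finset (Fin n) :=
  Finset.univ.filter (fun j => ∀ k : ℕ, (σ ^ k) j ≤ j)

@[simp]
lemma mem_cycleMaxSet {n : ℕ} {σ : Perm (Fin n)} {j : Fin n} :
    j ∈ cycleMaxSet σ ↔ ∀ k : ℕ, (σ ^ k) j ≤ j := by
  simp [cycleMaxSet]

namespace Equiv.Perm

variable {m : ℕ} (p : Fin (m + 1)) (e : Perm (Fin m))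

lemma pow_decomposeFin_symm_apply_succ_cases (i : Fin m) (k : ℕ) :
    (∃ l, (decomposeFin.symm (p, e) ^ k) i.succ = ((e ^ l) i).succ) ∨
      ((decomposeFin.symm (p, e) ^ k) i.succ = 0 ∧ ∃ l, p = ((e ^ l) i).succ) := by
  induction k with
  | zero => exact Or.inl ⟨0, rfl⟩
  | succ k ih =>
    rw [pow_succ', mul_apply]
    rcases ih with ⟨l, hl⟩ | ⟨h0, l, hp⟩
    · rw [hl, decomposeFin_symm_apply_succ, ← mul_apply, ← pow_succ']
      by_cases hp : ((e ^ (l + 1)) i).succ = p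
      · rw [hp, swap_apply_right]
        exact Or.inr ⟨rfl, l + 1, hp.symm⟩
      · rw [swap_apply_of_ne_of_ne (Fin.succ_ne_zero _) hp]
        exact Or.inl ⟨l + 1, rfl⟩
    · rw [h0, decomposeFin_symm_apply_zero]
      exact Or.inl ⟨l, hp⟩

lemma exists_pow_decomposeFin_symm_apply_succ (i : Fin m) (l : ℕ) :
    ∃ k, (decomposeFin.symm (p, e) ^ k) i.succ = ((e ^ l) i).succ := by
  induction l with
  | zero => exact ⟨0, rfl⟩
  | succ l ih =>
    obtain ⟨k, hk⟩ := ih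
    have hstep : (decomposeFin.symm (p, e) ^ (k + 1)) i.succ
        = swap 0 p ((e ^ (l + 1)) i).succ := by
      rw [pow_succ', mul_apply, hk, decomposeFin_symm_apply_succ, ← mul_apply, ← pow_succ']
    by_cases hp : ((e ^ (l + 1)) i).succ = p
    · refine ⟨k + 2, ?_⟩
      rw [pow_succ', mul_apply, hstep, hp, swap_apply_right, decomposeFin_symm_apply_zero]
    · exact ⟨k + 1, by rw [hstep, swap_apply_of_ne_of_ne (Fin.succ_ne_zero _) hp]⟩

lemma succ_mem_cycleMaxSet_decomposeFin_symm (i : Fin m) :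
    i.succ ∈ cycleMaxSet (decomposeFin.symm (p, e)) ↔ i ∈ cycleMaxSet e := by
  simp only [mem_cycleMaxSet]
  refine ⟨fun h l => ?_, fun h k => ?_⟩
  · obtain ⟨k, hk⟩ := exists_pow_decomposeFin_symm_apply_succ p e i l
    simpa [hk] using h k
  · rcases pow_decomposeFin_symm_apply_succ_cases p e i k with ⟨l, hl⟩ | ⟨h0, -⟩
    · simpa [hl] using h l
    · simp [h0]

lemma zero_mem_cycleMaxSet_decomposeFin_symm :
    0 ∈ cycleMaxSet (decomposeFin.symm (p, e)) ↔ p = 0 := by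
  simp only [mem_cycleMaxSet]
  refine ⟨fun h => by simpa using h 1, fun hp k => ?_⟩
  have hfix : decomposeFin.symm (p, e) 0 = 0 := by rw [decomposeFin_symm_apply_zero, hp]
  rw [pow_apply_eq_self_of_apply_eq_self hfix]

lemma cycleMaxSet_decomposeFin_symm_eq_iff (S : Finset (Fin (m + 1))) :
    cycleMaxSet (decomposeFin.symm (p, e)) = S ↔
      (p = 0 ↔ 0 ∈ S) ∧ cycleMaxSet e = univ.filter (fun i => i.succ ∈ S) := by
  constructor
  · rintro rfl
    refine ⟨(zero_mem_cycleMaxSet_decomposeFin_symm p e).symm, ?_⟩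
    ext i
    simp only [mem_filter, mem_univ, true_and, succ_mem_cycleMaxSet_decomposeFin_symm]
  · rintro ⟨h0, he⟩
    ext j
    induction j using Fin.cases with
    | zero => rw [zero_mem_cycleMaxSet_decomposeFin_symm, h0]
    | succ i => rw [succ_mem_cycleMaxSet_decomposeFin_symm, he, mem_filter]; simp

end Equiv.Perm

lemma Fin.prod_compl_eq_ite_mul {M : Type*} [CommMonoid M] {m : ℕ} (S : Finset (Fin (m + 1)))
    (f : Fin (m + 1) → M) :
    ∏ j ∈ Sᶜ, f j = (if 0 ∈ S then 1 else f 0)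
      * ∏ i ∈ (univ.filter (fun i : Fin m => i.succ ∈ S))ᶜ, f i.succ := by
  have h {k : ℕ} (T : Finset (Fin k)) (g : Fin k → M) :
      ∏ j ∈ Tᶜ, g j = ∏ j, if j ∈ T then 1 else g j := by
    rw [prod_ite, prod_const_one, one_mul, filter_not, filter_mem_eq_inter, univ_inter,
      compl_eq_univ_sdiff]
  rw [h, h, Fin.prod_univ_succ]
  simp

theorem card_filter_cycleMaxSet_eq_prod (m : ℕ) (S : Finset (Fin m)) :
    #{σ : Perm (Fin m) | cycleMaxSet σ = S} = ∏ j ∈ Sᶜ, (m - 1 - (j : ℕ)) := by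
  induction m with
  | zero =>
    rw [filter_true_of_mem fun σ _ => Subsingleton.elim _ _, Subsingleton.elim S univ]
    simp
  | succ m ih =>
    have hcount : #{σ : Perm (Fin (m + 1)) | cycleMaxSet σ = S}
        = #{p : Fin (m + 1) | p = 0 ↔ 0 ∈ S}
          * #{e : Perm (Fin m) | cycleMaxSet e = univ.filter (fun i => i.succ ∈ S)} := by
      rw [← card_product]
      refine card_equiv Perm.decomposeFin fun σ => ?_
      simp [← Perm.cycleMaxSet_decomposeFin_symm_eq_iff]
    rw [hcount, ih, Fin.prod_compl_eq_ite_mul]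
    congr 1
    · by_cases h0 : 0 ∈ S
      · simp [h0, filter_eq']
      · simp [h0, filter_ne']
    · refine prod_congr rfl fun i _ => ?_
      simp only [Fin.val_succ]
      omega

theorem stmt1_general (n : ℕ) (S : Finset (Fin (n + 1))) :
    (Finset.univ.filter (fun σ : Equiv.Perm (Fin (n + 1)) => cycleMaxSet σ = S)).card
      = ∏ j ∈ Sᶜ, (n - (j : ℕ)) := by
  simpa using card_filter_cycleMaxSet_eq_prod (n + 1) S

/-- For any subset `S` of `{1,…,n}` containing the largest element `n`, the number of
permutations whose set of cycle-maxima is `S` equals `∏_{j ∉ S} (n − j)`. -/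
theorem stmt1 (n : ℕ) (S : Finset (Fin (n + 1))) (hS : Fin.last n ∈ S) :
    (Finset.univ.filter (fun σ : Equiv.Perm (Fin (n + 1)) => cycleMaxSet σ = S)).card
      = ∏ j ∈ Sᶜ, (n - (j : ℕ)) :=
  stmt1_general n S
end

section
/- For every k with 1 ≤ k ≤ n, the k-th elementary shifted symmetric polynomial e*_k(x₁,…,x_n) = ∑_{1 ≤ i₁ < i₂ < ⋯ < i_k ≤ n} (x_{i₁} + k − 1)(x_{i₂} + k − 2) ⋯ (x_{i_k}) is shifted symmetric, i.e., for each 1 ≤ i ≤ n − 1 it is invariant under replacing the pair (x_i, x_{i+1}) by (x_{i+1} − 1, x_i + 1). -/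
/-!
Write `e*_k(x) = ∑_{#S = k} ∏_{j ∈ S} (x_j + #{u ∈ S | j < u})`: the `t`-th smallest element of
`S` has exactly `k - 1 - t` larger elements in `S`. Let `τ` be the transposition of `i` and
`i + 1` and `y` the substituted vector. If `S` contains both `i` and `i + 1`, their factors
`(x_i + c + 1)(x_{i+1} + c)` are unchanged by the substitution; if it contains neither, nothing
changes. If it contains exactly one of them, `τ` is order preserving on `S`, and the two terms of
`S` and `τ S` together depend on `x_i, x_{i+1}` only through `x_i + x_{i+1}`, which the
substitution preserves. Hence the difference of the two sums cancels along the involution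
`S ↦ τ S`.
-/

open scoped Classical

noncomputable def estar (n k : ℕ) (x : Fin n → ℂ) : ℂ :=
  ∑ i : Fin k → Fin n, if StrictMono i then
    ∏ t : Fin k, (x (i t) + ((k : ℂ) - 1 - ((t : ℕ) : ℂ))) else 0

open Finset

section ShiftedMonomial

variable {α R : Type*} [LinearOrder α] [CommRing R]

def shiftedMonomial (x : α → R) (S : Finset α) : R :=
  ∏ j ∈ S, (x j + #{u ∈ S | j < u})

lemma shiftedMonomial_image_of_strictMono {k : ℕ} (x : α → R) {f : Fin k → α}
    (hf : StrictMono f) :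
    shiftedMonomial x (univ.image f) = ∏ t : Fin k, (x (f t) + ((k - 1 - t : ℕ) : R)) := by
  rw [shiftedMonomial, prod_image hf.injective.injOn]
  refine prod_congr rfl fun t _ => ?_
  rw [filter_image, card_image_of_injective _ hf.injective, ← Fin.card_Ioi]
  congr 3
  ext u
  simp [hf.lt_iff_lt]

lemma shiftedMonomial_congr {x y : α → R} {S : Finset α} (h : ∀ j ∈ S, x j = y j) :
    shiftedMonomial x S = shiftedMonomial y S :=
  prod_congr rfl fun j hj => by rw [h j hj]

variable {a b : α}

lemma swap_lt_swap_iff_of_covBy (hab : a ⋖ b) {u v : α} (h : ¬(u = a ∧ v = b))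
    (h' : ¬(u = b ∧ v = a)) : Equiv.swap a b u < Equiv.swap a b v ↔ u < v := by
  have := hab.lt
  have := hab.2
  simp only [Equiv.swap_apply_def]
  grind

lemma shiftedMonomial_map_swap (hab : a ⋖ b) (x : α → R) {S : Finset α}
    (hS : ¬(a ∈ S ∧ b ∈ S)) :
    shiftedMonomial x (S.map (Equiv.swap a b).toEmbedding) =
      shiftedMonomial (x ∘ Equiv.swap a b) S := by
  rw [shiftedMonomial, prod_map]
  refine prod_congr rfl fun j hj => ?_
  simp only [filter_map, card_map, Function.comp_def, Equiv.coe_toEmbedding]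
  rw [filter_congr fun u hu => swap_lt_swap_iff_of_covBy hab (by grind) (by grind)]

lemma map_swap_eq_self_iff {S : Finset α} :
    S.map (Equiv.swap a b).toEmbedding = S ↔ (a ∈ S ↔ b ∈ S) := by
  constructor
  · intro h
    nth_rw 1 [← h]
    rw [mem_map_equiv, Equiv.symm_swap, Equiv.swap_apply_left]
  · intro h
    ext u
    rw [mem_map_equiv, Equiv.symm_swap, Equiv.swap_apply_def]
    split_ifs <;> grind

variable {x y : α → R} (hya : y a = x b - 1) (hyb : y b = x a + 1)
  (hy : ∀ j, j ≠ a → j ≠ b → y j = x j)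
include hya hyb hy

lemma shiftedMonomial_eq_of_mem_of_mem (hab : a ⋖ b) {S : Finset α} (ha : a ∈ S)
    (hb : b ∈ S) :
    shiftedMonomial y S = shiftedMonomial x S := by
  have hcount : #{u ∈ S | a < u} = #{u ∈ S | b < u} + 1 := by
    rw [← card_insert_of_notMem (s := {u ∈ S | b < u}) (a := b) (by simp)]
    congr 1
    ext u
    have := hab.lt
    have := hab.2 (c := u)
    simp only [mem_filter, mem_insert]
    grind
  have hb' : b ∈ S.erase a := mem_erase.2 ⟨hab.ne', hb⟩
  have split : ∀ z : α → R, shiftedMonomial z S =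
      (z a + #{u ∈ S | a < u}) * ((z b + #{u ∈ S | b < u}) *
        ∏ j ∈ (S.erase a).erase b, (z j + #{u ∈ S | j < u})) := fun z => by
    rw [mul_prod_erase _ (fun j => z j + #{u ∈ S | j < u}) hb',
      mul_prod_erase _ (fun j => z j + #{u ∈ S | j < u}) ha, shiftedMonomial]
  rw [split, split, prod_congr rfl fun j hj => by
    rw [hy j (ne_of_mem_erase (mem_of_mem_erase hj)) (ne_of_mem_erase hj)], hya, hyb, hcount]
  push_cast
  ring

lemma shiftedMonomial_eq_of_mem_iff (hab : a ⋖ b) {S : Finset α} (hS : a ∈ S ↔ b ∈ S) :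
    shiftedMonomial y S = shiftedMonomial x S := by
  by_cases ha : a ∈ S
  · exact shiftedMonomial_eq_of_mem_of_mem hya hyb hy hab ha (hS.1 ha)
  · exact shiftedMonomial_congr fun j hj => hy j (by grind) (by grind)

lemma shiftedMonomial_add_comp_swap {m : α} (hm : m = a ∨ m = b) {S : Finset α} (hmS : m ∈ S)
    (hS : Equiv.swap a b m ∉ S) :
    shiftedMonomial y S + shiftedMonomial (y ∘ Equiv.swap a b) S =
      shiftedMonomial x S + shiftedMonomial (x ∘ Equiv.swap a b) S := by
  have hoff : ∀ j ∈ S.erase m, j ≠ a ∧ j ≠ b := by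
    intro j hj
    have := ne_of_mem_erase hj
    have : j ≠ Equiv.swap a b m := fun h => hS (h ▸ mem_of_mem_erase hj)
    rcases hm with rfl | rfl <;> simp_all [Equiv.swap_apply_left, Equiv.swap_apply_right]
  have split : ∀ z : α → R, (∀ j ∈ S.erase m, z j = x j) → shiftedMonomial z S =
      (z m + #{u ∈ S | m < u}) * ∏ j ∈ S.erase m, (x j + #{u ∈ S | j < u}) := fun z hz => by
    rw [shiftedMonomial, ← mul_prod_erase _ _ hmS, prod_congr rfl fun j hj => by rw [hz j hj]]
  have hswap : ∀ j ∈ S.erase m, Equiv.swap a b j = j := fun j hj =>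
    Equiv.swap_apply_of_ne_of_ne (hoff j hj).1 (hoff j hj).2
  rw [split y fun j hj => hy j (hoff j hj).1 (hoff j hj).2,
    split (y ∘ Equiv.swap a b) fun j hj => by simp [hswap j hj, hy j (hoff j hj).1 (hoff j hj).2],
    split x fun _ _ => rfl, split (x ∘ Equiv.swap a b) fun j hj => by simp [hswap j hj]]
  have hpair : y m + y (Equiv.swap a b m) = x m + x (Equiv.swap a b m) := by
    rcases hm with rfl | rfl <;>
      simp only [Equiv.swap_apply_left, Equiv.swap_apply_right, hya, hyb] <;> ring
  simp only [Function.comp_apply]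
  linear_combination (∏ j ∈ S.erase m, (x j + #{u ∈ S | j < u})) * hpair

theorem sum_shiftedMonomial_eq_of_covBy [Fintype α] (hab : a ⋖ b) (k : ℕ) :
    ∑ S ∈ powersetCard k univ, shiftedMonomial y S =
      ∑ S ∈ powersetCard k univ, shiftedMonomial x S := by
  rw [← sub_eq_zero, ← sum_sub_distrib]
  refine sum_involution (fun S _ => S.map (Equiv.swap a b).toEmbedding) (fun S _ => ?_)
    (fun S _ hne hfix => hne ?_) (fun S hS => by simpa using hS) fun S _ => by ext; simp
  · by_cases hS : a ∈ S ↔ b ∈ S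
    · rw [map_swap_eq_self_iff.2 hS, shiftedMonomial_eq_of_mem_iff hya hyb hy hab hS]
      simp
    · obtain ⟨m, hm, hmS, hτm⟩ : ∃ m, (m = a ∨ m = b) ∧ m ∈ S ∧ Equiv.swap a b m ∉ S := by
        by_cases ha : a ∈ S
        · exact ⟨a, .inl rfl, ha, by simp_all⟩
        · exact ⟨b, .inr rfl, by tauto, by simp_all⟩
      rw [shiftedMonomial_map_swap hab x (by tauto), shiftedMonomial_map_swap hab y (by tauto)]
      linear_combination shiftedMonomial_add_comp_swap hya hyb hy hm hmS hτm
  · rw [shiftedMonomial_eq_of_mem_iff hya hyb hy hab (map_swap_eq_self_iff.1 hfix), sub_self]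

end ShiftedMonomial

lemma estar_eq_sum_shiftedMonomial (n k : ℕ) (x : Fin n → ℂ) :
    estar n k x = ∑ S ∈ powersetCard k univ, shiftedMonomial x S := by
  rw [estar, ← sum_filter]
  refine sum_bij' (fun f _ => univ.image f)
    (fun S hS => S.orderEmbOfFin (mem_powersetCard_univ.1 hS)) (fun f hf => ?_)
    (fun S _ => mem_filter.2 ⟨mem_univ _, (S.orderEmbOfFin _).strictMono⟩)
    (fun f hf => ?_) (fun S _ => image_orderEmbOfFin_univ _ _) (fun f hf => ?_)
  all_goals replace hf : StrictMono f := (mem_filter.1 hf).2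
  · simp [card_image_of_injective _ hf.injective]
  · exact (orderEmbOfFin_unique _ (fun t => mem_image_of_mem f (mem_univ t)) hf).symm
  · rw [shiftedMonomial_image_of_strictMono x hf]
    refine prod_congr rfl fun t _ => ?_
    have := t.isLt
    rw [Nat.cast_sub (by omega), Nat.cast_sub (by omega)]
    push_cast
    ring

theorem stmt2_general (n k : ℕ) (x : Fin n → ℂ)
    (i : Fin n) (h : (i : ℕ) + 1 < n) :
    estar n k x = estar n k (fun j =>
      if j = i then x ⟨(i : ℕ) + 1, h⟩ - 1
      else if j = ⟨(i : ℕ) + 1, h⟩ then x i + 1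
      else x j) := by
  have hcov : i ⋖ ⟨(i : ℕ) + 1, h⟩ := Fin.covBy_iff.2 (Nat.covBy_iff_add_one_eq.2 rfl)
  rw [estar_eq_sum_shiftedMonomial, estar_eq_sum_shiftedMonomial]
  exact (sum_shiftedMonomial_eq_of_covBy (by simp) (by simp [hcov.ne'])
    (fun j hi hi' => by simp [hi, hi']) hcov k).symm

/-- `e*_k` is shifted symmetric: it is invariant under replacing `(x_i, x_{i+1})` by
`(x_{i+1} − 1, x_i + 1)`. -/
theorem stmt2 (n k : ℕ) (hk1 : 1 ≤ k) (hkn : k ≤ n) (x : Fin n → ℂ)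
    (i : Fin n) (h : (i : ℕ) + 1 < n) :
    estar n k x = estar n k (fun j =>
      if j = i then x ⟨(i : ℕ) + 1, h⟩ - 1
      else if j = ⟨(i : ℕ) + 1, h⟩ then x i + 1
      else x j) :=
  stmt2_general n k x i h
end

section
/- For every k ≥ 1 and n ≥ 1, the k-th complete shifted symmetric polynomial h*_k(x₁,…,x_n) = ∑_{1 ≤ i₁ ≤ i₂ ≤ ⋯ ≤ i_k ≤ n} (x_{i₁} − k + 1)(x_{i₂} − k + 2) ⋯ (x_{i_k}) is shifted symmetric, i.e., invariant under replacing (x_i, x_{i+1}) by (x_{i+1} − 1, x_i + 1) for each 1 ≤ i ≤ n − 1. -/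
/-!
Write `h*_k(x) = S_k(x - (k - 1))`, where `S_m(y) = ∑_{i₁ ≤ ⋯ ≤ i_m} ∏_t (y_{i_t} + t)`.
Splitting on whether the last index equals `n` gives
`S_{m+1}(y₁, …, yₙ) = S_{m+1}(y₁, …, y_{n-1}) + (yₙ + m) S_m(y₁, …, yₙ)`,
so a move not involving `yₙ` is handled by induction on `n` and `m`. For the last two
variables `u = y_{n-1}`, `v = yₙ`, eliminating `S(y₁, …, y_{n-1})` between two instances of
this recursion gives
`S_{m+2} = (u + v + 2m + 2) S_{m+1} - (u + m + 1)(v + m) S_m + S_{m+2}(y₁, …, y_{n-2})`;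
its coefficients and the initial values `S_0 = 1`, `S_1 = u + v + S_1(y₁, …, y_{n-2})` are
invariant under `(u, v) ↦ (v - 1, u + 1)`.
-/

open scoped Classical

/-- The `k`-th complete shifted symmetric polynomial
`h*_k(x₁,…,xₙ) = ∑_{i₁≤⋯≤i_k} (x_{i₁}−k+1)(x_{i₂}−k+2)⋯(x_{i_k})`. -/
noncomputable def hstar (n k : ℕ) (x : Fin n → ℂ) : ℂ :=
  ∑ i : Fin k → Fin n, if Monotone i then
    ∏ t : Fin k, (x (i t) - ((k : ℂ) - 1 - ((t : ℕ) : ℂ))) else 0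

open Finset Fin

variable {R : Type*} [CommRing R]

noncomputable def risingComplete (n m : ℕ) (y : Fin n → R) : R :=
  ∑ f : Fin m → Fin n, if Monotone f then ∏ t : Fin m, (y (f t) + (t : ℕ)) else 0

lemma Fin.monotone_snoc_last {m n : ℕ} {g : Fin m → Fin (n + 1)} (hg : Monotone g) :
    Monotone (snoc g (last n) : Fin (m + 1) → Fin (n + 1)) := by
  intro s t hst
  induction t using lastCases with
  | last => simp [le_last]
  | cast t =>
    induction s using lastCases with
    | last => exact absurd hst (not_le.2 (castSucc_lt_last t))
    | cast s => simpa using hg (castSucc_le_castSucc_iff.1 hst)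

lemma risingComplete_zero (n : ℕ) (y : Fin n → R) : risingComplete n 0 y = 1 := by
  simp [risingComplete, Subsingleton.monotone]

lemma risingComplete_eq_sum_monotone (n m : ℕ) (y : Fin n → R) :
    risingComplete n m y =
      ∑ f ∈ univ.filter Monotone, ∏ t : Fin m, (y (f t) + (t : ℕ)) := by
  rw [risingComplete, sum_filter]

lemma filter_monotone_last_eq_image_snoc (m n : ℕ) :
    univ.filter (fun f : Fin (m + 1) → Fin (n + 1) => Monotone f ∧ f (last m) = last n) =
      (univ.filter Monotone).image (fun g => snoc g (last n)) := by
  ext f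
  simp only [mem_filter, mem_univ, true_and, mem_image]
  constructor
  · rintro ⟨hf, hlast⟩
    refine ⟨init f, hf.comp fun _ _ => castSucc_le_castSucc_iff.2, ?_⟩
    rw [← hlast, snoc_init_self]
  · rintro ⟨g, hg, rfl⟩
    exact ⟨monotone_snoc_last hg, snoc_last _ _⟩

lemma filter_monotone_last_ne_eq_image_castSucc (m n : ℕ) :
    univ.filter (fun f : Fin (m + 1) → Fin (n + 1) => Monotone f ∧ f (last m) ≠ last n) =
      (univ.filter Monotone).image (castSucc ∘ ·) := by
  ext f
  simp only [mem_filter, mem_univ, true_and, mem_image]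
  constructor
  · rintro ⟨hf, hlast⟩
    have hne : ∀ t, f t ≠ last n := fun t =>
      ne_last_of_lt ((hf (le_last t)).trans_lt (lt_last_iff_ne_last.2 hlast))
    exact ⟨fun t => (f t).castPred (hne t), monotone_castPred_comp hne hf, by funext t; simp⟩
  · rintro ⟨g, hg, rfl⟩
    exact ⟨Fin.strictMono_castSucc.monotone.comp hg, (castSucc_lt_last _).ne⟩

lemma risingComplete_succ_succ (n m : ℕ) (y : Fin (n + 1) → R) :
    risingComplete (n + 1) (m + 1) y =
      risingComplete n (m + 1) (y ∘ castSucc) +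
        (y (last n) + m) * risingComplete (n + 1) m y := by
  rw [risingComplete_eq_sum_monotone,
    ← sum_filter_add_sum_filter_not _ (fun f => f (last m) = last n), filter_filter,
    filter_filter, add_comm, filter_monotone_last_eq_image_snoc,
    filter_monotone_last_ne_eq_image_castSucc, sum_image, sum_image]
  · simp only [risingComplete_eq_sum_monotone, mul_sum]
    congr 1
    refine sum_congr rfl fun g _ => ?_
    simp [prod_univ_castSucc, mul_comm]
  · exact fun g _ g' _ h => by simpa using congrArg init h
  · exact fun g _ g' _ h => funext fun t => castSucc_injective _ (congrFun h t)

def shiftSwap {n : ℕ} (y : Fin n → R) (i j : Fin n) : Fin n → R :=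
  fun l => if l = i then y j - 1 else if l = j then y i + 1 else y l

lemma shiftSwap_sub_const {n : ℕ} (y : Fin n → R) (i j : Fin n) (c : R) :
    shiftSwap (fun l => y l - c) i j = fun l => shiftSwap y i j l - c := by
  funext l
  simp only [shiftSwap]
  split_ifs <;> ring

lemma shiftSwap_castSucc_comp_castSucc {n : ℕ} (y : Fin (n + 1) → R) (i j : Fin n) :
    shiftSwap y i.castSucc j.castSucc ∘ castSucc = shiftSwap (y ∘ castSucc) i j := by
  funext l
  simp [shiftSwap]

lemma shiftSwap_castSucc_last {n : ℕ} (y : Fin (n + 1) → R) (i j : Fin n) :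
    shiftSwap y i.castSucc j.castSucc (last n) = y (last n) := by
  simp [shiftSwap, (castSucc_lt_last _).ne']

lemma hstar_eq_risingComplete (n k : ℕ) (x : Fin n → ℂ) :
    hstar n k x = risingComplete n k (fun l => x l - (k - 1)) := by
  refine sum_congr rfl fun f _ => ?_
  congr 1
  exact prod_congr rfl fun t _ => by ring

lemma risingComplete_add_two_add_two (n m : ℕ) (y : Fin (n + 2) → R) :
    risingComplete (n + 2) (m + 2) y =
      (y (last n).castSucc + y (last (n + 1)) + 2 * m + 2) * risingComplete (n + 2) (m + 1) y
        - (y (last n).castSucc + m + 1) * (y (last (n + 1)) + m) * risingComplete (n + 2) m y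
        + risingComplete n (m + 2) (y ∘ castSucc ∘ castSucc) := by
  have h₁ := risingComplete_succ_succ (n + 1) (m + 1) y
  have h₂ := risingComplete_succ_succ n (m + 1) (y ∘ castSucc)
  have h₃ := risingComplete_succ_succ (n + 1) m y
  push_cast at h₁ h₂ h₃
  simp only [Function.comp_assoc, Function.comp_apply] at h₂
  linear_combination h₁ + h₂ - (y (last n).castSucc + m + 1) * h₃

lemma risingComplete_add_two_one (n : ℕ) (y : Fin (n + 2) → R) :
    risingComplete (n + 2) 1 y =
      y (last n).castSucc + y (last (n + 1)) +
        risingComplete n 1 (y ∘ castSucc ∘ castSucc) := by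
  rw [risingComplete_succ_succ, risingComplete_succ_succ]
  simp only [risingComplete_zero, Function.comp_assoc, Function.comp_apply, Nat.cast_zero,
    add_zero, mul_one]
  ring

lemma risingComplete_shiftSwap_last (n m : ℕ) (y : Fin (n + 2) → R) :
    risingComplete (n + 2) m (shiftSwap y (last n).castSucc (last (n + 1))) =
      risingComplete (n + 2) m y := by
  set y' := shiftSwap y (last n).castSucc (last (n + 1)) with hy'
  have hu : y' (last n).castSucc = y (last (n + 1)) - 1 := by simp [hy', shiftSwap]
  have hv : y' (last (n + 1)) = y (last n).castSucc + 1 := by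
    simp [hy', shiftSwap, (castSucc_lt_last _).ne']
  have hz : y' ∘ castSucc ∘ castSucc = y ∘ castSucc ∘ castSucc := by
    funext l
    simp [hy', shiftSwap, (castSucc_lt_last _).ne]
  induction m using Nat.twoStepInduction with
  | zero => simp only [risingComplete_zero]
  | one => rw [risingComplete_add_two_one, risingComplete_add_two_one, hu, hv, hz]; ring
  | more m ih₀ ih₁ =>
    rw [risingComplete_add_two_add_two, risingComplete_add_two_add_two, ih₀, ih₁, hu, hv, hz]
    ring

theorem risingComplete_shiftSwap (n : ℕ) (i : Fin n) (m : ℕ) (y : Fin (n + 1) → R) :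
    risingComplete (n + 1) m (shiftSwap y i.castSucc i.succ) = risingComplete (n + 1) m y := by
  induction n generalizing m with
  | zero => exact i.elim0
  | succ n ih =>
    induction i using lastCases with
    | last => simpa using risingComplete_shiftSwap_last n m y
    | cast i =>
      rw [succ_castSucc]
      induction m with
      | zero => simp only [risingComplete_zero]
      | succ m ihm =>
        rw [risingComplete_succ_succ, shiftSwap_castSucc_comp_castSucc, shiftSwap_castSucc_last, ih,
          ihm, risingComplete_succ_succ (n + 1)]

theorem stmt3_general (n k : ℕ) (x : Fin n → ℂ)
    (i : Fin n) (h : (i : ℕ) + 1 < n) :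
    hstar n k x = hstar n k (fun j =>
      if j = i then x ⟨(i : ℕ) + 1, h⟩ - 1
      else if j = ⟨(i : ℕ) + 1, h⟩ then x i + 1
      else x j) := by
  obtain ⟨n, rfl⟩ : ∃ n', n = n' + 1 := ⟨n - 1, by omega⟩
  have hswap := risingComplete_shiftSwap n ⟨i, by omega⟩ k (fun l => x l - (k - 1))
  rw [hstar_eq_risingComplete, hstar_eq_risingComplete, ← hswap, shiftSwap_sub_const]
  rfl

/-- `h*_k` is shifted symmetric: it is invariant under replacing `(x_i, x_{i+1})` by
`(x_{i+1} − 1, x_i + 1)`. -/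
theorem stmt3 (n k : ℕ) (hk1 : 1 ≤ k) (hn : 1 ≤ n) (x : Fin n → ℂ)
    (i : Fin n) (h : (i : ℕ) + 1 < n) :
    hstar n k x = hstar n k (fun j =>
      if j = i then x ⟨(i : ℕ) + 1, h⟩ - 1
      else if j = ⟨(i : ℕ) + 1, h⟩ then x i + 1
      else x j) :=
  stmt3_general n k x i h
end

section
/- Let μ be a partition with μ₁ ≤ n and conjugate (transpose) partition μ̃, and let 1 ≤ k ≤ n with also μ̃₁ ≤ n. Then e*_k(μ̃₁, μ̃₂, …, μ̃_n) = h*_k(μ₁, μ₂, …, μ_n), where e*_k(y₁,…,y_n) = ∑_{i₁<⋯<i_k} (y_{i₁}+k−1)(y_{i₂}+k−2)⋯(y_{i_k}) and h*_k(y₁,…,y_n) = ∑_{i₁≤⋯≤i_k} (y_{i₁}−k+1)(y_{i₂}−k+2)⋯(y_{i_k}). -/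
/-!
Both sides are coefficients of generating functions in the rising-factorial basis
`(u)_l = u (u + 1) ⋯ (u + l - 1)`. Splitting off the first variable gives the recurrences
`e*_{k+1}(x) = e*_{k+1}(x') + (x₁ + k) e*_k(x')` and
`h*_{k+1}(y) = h*_{k+1}(y') + (y₁ - k) h*_k(y)`, which by induction on the number of variables
give `∑_{k+l=n} e*_k(x) (u)_l = ∏_i (u + x_i + n - i)` and, for `μ₁ ≤ K`,
`(∑_{k+l=K} h*_k(μ) (u)_l) ∏_j (u + K + j - 1 - μ_j) = (u)_{K+n}` (indices from 1).
The numbers `μ̃_i + n - i` and `n + j - 1 - μ_j` (`1 ≤ i, j ≤ n`) are exactly `0, …, 2n - 1`,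
so `∏_i (u + μ̃_i + n - i) ∏_j (u + n + j - 1 - μ_j) = (u)_{2n}` as well. Cancelling the
common factor `∏_j (u + n + j - 1 - μ_j)` and comparing coefficients in the basis `(u)_l`
gives `e*_k(μ̃) = h*_k(μ)`.
-/

open scoped Classical

/-- The conjugate (transpose) partition: `conjP n μ j = #{i < n : μ i ≥ j+1}`
(0-indexed; valid when `μ` vanishes from index `n` on). -/
noncomputable def conjP (n : ℕ) (μ : ℕ → ℕ) (j : ℕ) : ℕ :=
  ((Finset.range n).filter (fun i => j + 1 ≤ μ i)).card

open Finset Polynomial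

section FinTuples
variable {R : Type*} [AddCommMonoid R] {m n : ℕ}

theorem sum_eq_sum_succ_comp (g : (Fin m → Fin (n + 1)) → R)
    (hg : ∀ i, g i ≠ 0 → ∀ t, i t ≠ 0) :
    ∑ i, g i = ∑ j : Fin m → Fin n, g (Fin.succ ∘ j) := by
  have hinj : Function.Injective (fun j : Fin m → Fin n => Fin.succ ∘ j) :=
    fun j j' h => funext fun t => Fin.succ_injective _ (congrFun h t)
  rw [← sum_image (s := univ) fun j _ j' _ h => hinj h]
  refine (sum_subset (subset_univ _) fun i _ hi => ?_).symm
  by_contra hgi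
  choose j hj using fun t => Fin.exists_succ_eq.mpr (hg i hgi t)
  exact hi (mem_image.mpr ⟨j, mem_univ _, funext hj⟩)

theorem sum_eq_sum_succ_comp_add_sum_cons_zero {k : ℕ} (g : (Fin (k + 1) → Fin (n + 1)) → R)
    (hg : ∀ i, g i ≠ 0 → ∀ t, i 0 ≤ i t) :
    ∑ i, g i = ∑ j : Fin (k + 1) → Fin n, g (Fin.succ ∘ j) + ∑ j, g (Fin.cons 0 j) := by
  rw [← sum_filter_not_add_sum_filter univ (fun i => i 0 = 0)]
  have hcons : ∀ i : Fin (k + 1) → Fin (n + 1), i 0 = 0 → Fin.cons 0 (Fin.tail i) = i :=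
    fun i hi => hi ▸ Fin.cons_self_tail i
  congr 1
  · rw [sum_filter, sum_eq_sum_succ_comp]
    · simp [Fin.succ_ne_zero]
    · intro i hi t ht
      obtain ⟨h0, hgi⟩ := ite_ne_right_iff.mp hi
      exact h0 (nonpos_iff_eq_zero.mp (ht ▸ hg i hgi t))
  · exact sum_nbij' Fin.tail (fun j => (Fin.cons 0 j : Fin (k + 1) → Fin (n + 1))) (by simp)
      (by simp) (fun i hi => hcons i (mem_filter.mp hi).2) (by simp)
      (fun i hi => by rw [hcons i (mem_filter.mp hi).2])

end FinTuples

theorem Fin.monotone_cons {α : Type*} [Preorder α] {k : ℕ} {f : Fin k → α} {a : α} :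
    Monotone (Fin.cons a f : Fin (k + 1) → α) ↔ (∀ j, a ≤ f j) ∧ Monotone f := by
  rw [monotone_iff_forall_lt, monotone_iff_forall_lt]
  exact Fin.liftFun_cons (· ≤ ·)

theorem Fin.monotone_succ_comp_iff {α : Type*} [Preorder α] {n : ℕ} {f : α → Fin n} :
    Monotone (Fin.succ ∘ f) ↔ Monotone f :=
  ⟨fun h _ _ hab => Fin.succ_le_succ_iff.mp (h hab),
    fun h => Fin.strictMono_succ.monotone.comp h⟩

theorem Fin.strictMono_succ_comp_iff {α : Type*} [Preorder α] {n : ℕ} {f : α → Fin n} :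
    StrictMono (Fin.succ ∘ f) ↔ StrictMono f :=
  ⟨fun h _ _ hab => Fin.succ_lt_succ_iff.mp (h hab), fun h => Fin.strictMono_succ.comp h⟩

theorem estar_zero_right (n : ℕ) (x : Fin n → ℂ) : estar n 0 x = 1 := by
  simp [estar, Subsingleton.strictMono]

theorem hstar_zero_right (n : ℕ) (x : Fin n → ℂ) : hstar n 0 x = 1 := by
  simp [hstar, Subsingleton.monotone]

theorem hstar_zero_succ (k : ℕ) (x : Fin 0 → ℂ) : hstar 0 (k + 1) x = 0 := by
  simp [hstar]

theorem estar_eq_zero_of_lt {n k : ℕ} (x : Fin n → ℂ) (h : n < k) : estar n k x = 0 := by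
  refine sum_eq_zero fun i _ => if_neg fun hi => ?_
  have := Fintype.card_le_of_injective i hi.injective
  simp only [Fintype.card_fin] at this
  omega

theorem estar_succ_succ (n k : ℕ) (x : Fin (n + 1) → ℂ) :
    estar (n + 1) (k + 1) x
      = estar n (k + 1) (x ∘ Fin.succ) + (x 0 + k) * estar n k (x ∘ Fin.succ) := by
  rw [estar, sum_eq_sum_succ_comp_add_sum_cons_zero]
  · congr 1
    · simp only [estar, Fin.strictMono_succ_comp_iff, Function.comp_apply]
    · rw [sum_eq_sum_succ_comp, estar, mul_sum]
      · refine sum_congr rfl fun j _ => ?_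
        simp only [Fin.strictMono_cons, Fin.succ_pos, implies_true, true_and, Function.comp_apply,
          Fin.strictMono_succ_comp_iff, mul_ite, mul_zero, Fin.prod_univ_succ, Fin.cons_zero,
          Fin.cons_succ, Fin.val_zero, Fin.val_succ]
        congr 1
        push_cast
        ring_nf
      · exact fun j hj t => ((Fin.strictMono_cons.mp (ite_ne_right_iff.mp hj).1).1 t).ne'
  · exact fun i hi t => (ite_ne_right_iff.mp hi).1.monotone (Fin.zero_le t)

theorem hstar_succ_succ (n k : ℕ) (y : Fin (n + 1) → ℂ) :
    hstar (n + 1) (k + 1) y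
      = hstar n (k + 1) (y ∘ Fin.succ) + (y 0 - k) * hstar (n + 1) k y := by
  rw [hstar, sum_eq_sum_succ_comp_add_sum_cons_zero]
  · congr 1
    · simp only [hstar, Fin.monotone_succ_comp_iff, Function.comp_apply]
    · rw [hstar, mul_sum]
      refine sum_congr rfl fun j _ => ?_
      simp only [Fin.monotone_cons, Fin.zero_le, implies_true, true_and, mul_ite, mul_zero,
        Fin.prod_univ_succ, Fin.cons_zero, Fin.cons_succ, Fin.val_zero, Fin.val_succ]
      congr 1
      push_cast
      ring_nf
  · exact fun i hi t => (ite_ne_right_iff.mp hi).1 (Fin.zero_le t)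

theorem hstar_eq_zero_of_lt : ∀ {n k : ℕ} {μ : ℕ → ℕ}, Antitone μ → μ 0 < k →
    hstar n k (fun i : Fin n => (μ i : ℂ)) = 0
  | 0, k + 1, _, _, _ => hstar_zero_succ k _
  | n + 1, k + 1, μ, hμ, hk => by
    have htail : hstar n (k + 1) (fun i : Fin n => (μ (i + 1) : ℂ)) = 0 :=
      hstar_eq_zero_of_lt (μ := fun m => μ (m + 1)) (fun _ _ h => hμ (Nat.succ_le_succ h))
        ((hμ (Nat.zero_le 1)).trans_lt hk)
    rw [hstar_succ_succ, Function.comp_def]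
    simp only [Fin.val_succ, Fin.val_zero, htail, zero_add]
    rcases (Nat.lt_succ_iff.mp hk).eq_or_lt with h | h
    · simp [h] -- at `k = μ 0` the coefficient `μ 0 - k` vanishes
    · rw [hstar_eq_zero_of_lt hμ h, mul_zero]

theorem ascPochhammer_eval_eq_prod_range {R : Type*} [CommSemiring R] (n : ℕ) (u : R) :
    (ascPochhammer R n).eval u = ∏ j ∈ range n, (u + j) := by
  induction n with
  | zero => simp
  | succ n ih => rw [ascPochhammer_succ_eval, ih, prod_range_succ]

section Pochhammer
variable {R : Type*} [CommRing R]

theorem sum_antidiagonal_succ_mul_ascPochhammer_eval {a b : ℕ → R} {c u : R} {N : ℕ}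
    (h0 : a 0 = b 0) (hrec : ∀ k, a (k + 1) = b (k + 1) + (c + k) * b k) (hN : b (N + 1) = 0) :
    ∑ p ∈ antidiagonal (N + 1), a p.1 * (ascPochhammer R p.2).eval u
      = (u + c + N) * ∑ p ∈ antidiagonal N, b p.1 * (ascPochhammer R p.2).eval u := by
  have hb : b 0 * (ascPochhammer R (N + 1)).eval u
        + ∑ p ∈ antidiagonal N, b (p.1 + 1) * (ascPochhammer R p.2).eval u
      = ∑ p ∈ antidiagonal N, b p.1 * (ascPochhammer R p.2).eval u * (u + p.2) := by
    rw [← Nat.sum_antidiagonal_succ (f := fun p => b p.1 * (ascPochhammer R p.2).eval u),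
      Nat.sum_antidiagonal_succ']
    simp only [hN, zero_mul, zero_add, ascPochhammer_succ_eval, mul_assoc]
  calc ∑ p ∈ antidiagonal (N + 1), a p.1 * (ascPochhammer R p.2).eval u
      = b 0 * (ascPochhammer R (N + 1)).eval u
          + ∑ p ∈ antidiagonal N, (b (p.1 + 1) * (ascPochhammer R p.2).eval u
            + (c + p.1) * b p.1 * (ascPochhammer R p.2).eval u) := by
        simp only [Nat.sum_antidiagonal_succ, h0, hrec, add_mul]
    _ = ∑ p ∈ antidiagonal N, (b p.1 * (ascPochhammer R p.2).eval u * (u + p.2)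
          + (c + p.1) * b p.1 * (ascPochhammer R p.2).eval u) := by
        rw [sum_add_distrib, ← add_assoc, hb, sum_add_distrib]
    _ = (u + c + N) * ∑ p ∈ antidiagonal N, b p.1 * (ascPochhammer R p.2).eval u := by
        rw [mul_sum]
        refine sum_congr rfl fun p hp => ?_
        rw [← HasAntidiagonal.mem_antidiagonal.mp hp]
        push_cast
        ring

theorem forall_eq_zero_of_sum_antidiagonal_mul_ascPochhammer_eval [IsDomain R] [CharZero R]
    {N : ℕ} {c : ℕ → R}
    (h : ∀ u, ∑ p ∈ antidiagonal N, c p.1 * (ascPochhammer R p.2).eval u = 0) :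
    ∀ k ≤ N, c k = 0 := by
  suffices ∀ l k, k + l = N → c k = 0 from fun k hk => this (N - k) k (by omega)
  intro l
  induction l using Nat.strong_induction_on with
  | _ l ih =>
    intro k hkl
    have hl := h (-(l : R))
    rw [sum_eq_single_of_mem (k, l) (HasAntidiagonal.mem_antidiagonal.mpr hkl)] at hl
    · refine (mul_eq_zero.mp hl).resolve_right ?_
      simp
    · rintro ⟨k', l'⟩ hp hne
      simp only [HasAntidiagonal.mem_antidiagonal] at hp
      rcases lt_trichotomy l' l with hlt | rfl | hgt
      · rw [ih l' hlt k' hp, zero_mul]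
      · obtain rfl : k' = k := by omega
        exact absurd rfl hne
      · rw [ascPochhammer_eval_neg_coe_nat_of_lt hgt, mul_zero]

theorem forall_eq_zero_of_sum_antidiagonal_mul_ascPochhammer_eval_mul_eq_zero [IsDomain R]
    [CharZero R] {N : ℕ} {c : ℕ → R} {q : R[X]} (hq : q ≠ 0)
    (h : ∀ u, (∑ p ∈ antidiagonal N, c p.1 * (ascPochhammer R p.2).eval u) * q.eval u = 0) :
    ∀ k ≤ N, c k = 0 := by
  let P : R[X] := ∑ p ∈ antidiagonal N, C (c p.1) * ascPochhammer R p.2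
  have hP : ∀ u, P.eval u = ∑ p ∈ antidiagonal N, c p.1 * (ascPochhammer R p.2).eval u :=
    fun u => by simp [P, eval_finsetSum]
  have hPq : P * q = 0 := Polynomial.funext fun u => by rw [eval_mul, hP, h, eval_zero]
  refine forall_eq_zero_of_sum_antidiagonal_mul_ascPochhammer_eval fun u => ?_
  rw [← hP, (mul_eq_zero.mp hPq).resolve_right hq, eval_zero]

end Pochhammer

theorem sum_antidiagonal_estar_mul_ascPochhammer_eval (n : ℕ) (x : Fin n → ℂ) (u : ℂ) :
    ∑ p ∈ antidiagonal n, estar n p.1 x * (ascPochhammer ℂ p.2).eval u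
      = ∏ i : Fin n, (u + x i + n - 1 - i) := by
  induction n with
  | zero => simp [estar_zero_right]
  | succ n ih =>
    have hshift := sum_antidiagonal_succ_mul_ascPochhammer_eval (u := u) (N := n)
      (a := fun k => estar (n + 1) k x) (b := fun k => estar n k (x ∘ Fin.succ)) (c := x 0)
      ((estar_zero_right _ _).trans (estar_zero_right _ _).symm) (estar_succ_succ n · x)
      (estar_eq_zero_of_lt _ n.lt_succ_self)
    rw [hshift, ih, Fin.prod_univ_succ]
    simp only [Function.comp_apply, Fin.val_zero, Fin.val_succ]
    push_cast
    congr 1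
    · ring
    · exact prod_congr rfl fun i _ => by ring

theorem sum_antidiagonal_hstar_mul_ascPochhammer_eval_mul_prod (n K : ℕ) {μ : ℕ → ℕ}
    (hμ : Antitone μ) (hK : μ 0 ≤ K) (u : ℂ) :
    (∑ p ∈ antidiagonal K,
        hstar n p.1 (fun i : Fin n => (μ i : ℂ)) * (ascPochhammer ℂ p.2).eval u)
        * ∏ j : Fin n, (u + K + j - μ j)
      = (ascPochhammer ℂ (K + n)).eval u := by
  induction n generalizing K μ with
  | zero =>
    rw [sum_eq_single_of_mem (0, K) (by simp)]
    · simp [hstar_zero_right]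
    · rintro ⟨_ | k, l⟩ hp hne
      · simp_all
      · rw [hstar_zero_succ, zero_mul]
  | succ n ih =>
    -- `hstar_succ_succ` read backwards: `h*(μ ∘ succ)` in terms of `h*(μ)`, with `c = -μ 0`
    have hshift := sum_antidiagonal_succ_mul_ascPochhammer_eval (u := u) (N := K)
      (a := fun k => hstar n k (fun i : Fin n => (μ (i + 1) : ℂ)))
      (b := fun k => hstar (n + 1) k (fun i : Fin (n + 1) => (μ i : ℂ))) (c := -(μ 0 : ℂ))
      ((hstar_zero_right _ _).trans (hstar_zero_right _ _).symm)
      (fun k => by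
        rw [hstar_succ_succ]
        simp only [Function.comp_def, Fin.val_succ, Fin.val_zero]
        ring)
      (hstar_eq_zero_of_lt hμ (Nat.lt_succ_of_le hK))
    have htail : ∏ j : Fin n, (u + K + (j.succ : ℕ) - μ j.succ)
        = ∏ j : Fin n, (u + (K + 1 : ℕ) + j - μ (j + 1)) :=
      prod_congr rfl fun j _ => by push_cast [Fin.val_succ]; ring
    calc _ = (∑ p ∈ antidiagonal (K + 1),
            hstar n p.1 (fun i : Fin n => (μ (i + 1) : ℂ)) * (ascPochhammer ℂ p.2).eval u)
          * ∏ j : Fin n, (u + (K + 1 : ℕ) + j - μ (j + 1)) := by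
          rw [Fin.prod_univ_succ, htail, hshift, Fin.val_zero]
          push_cast
          ring
      _ = (ascPochhammer ℂ (K + (n + 1))).eval u := by
          rw [show K + (n + 1) = K + 1 + n by omega]
          exact ih (K + 1) (μ := fun m => μ (m + 1)) (fun _ _ h => hμ (Nat.succ_le_succ h))
            ((hμ (Nat.zero_le 1)).trans (hK.trans K.le_succ))

theorem conjP_le (n : ℕ) (μ : ℕ → ℕ) (i : ℕ) : conjP n μ i ≤ n :=
  (card_filter_le _ _).trans (card_range n).le

theorem conjP_antitone (n : ℕ) (μ : ℕ → ℕ) : Antitone (conjP n μ) :=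
  fun _ _ hab => card_le_card fun r hr => by
    simp only [mem_filter] at hr ⊢
    exact ⟨hr.1, by omega⟩

section ConjugatePartition
variable {n : ℕ} {μ : ℕ → ℕ}

theorem lt_conjP_iff (hμ : Antitone μ) {i j : ℕ} (hj : j < n) :
    j < conjP n μ i ↔ i < μ j := by
  constructor
  · intro h
    by_contra! hμj
    have hsub : (range n).filter (fun r => i + 1 ≤ μ r) ⊆ range j := fun r hr => by
      simp only [mem_filter, mem_range] at hr ⊢
      by_contra! hjr
      have := hμ hjr
      omega
    have := (card_le_card hsub).trans_eq (card_range j)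
    rw [conjP] at h
    omega
  · intro h
    have hsub : range (j + 1) ⊆ (range n).filter (fun r => i + 1 ≤ μ r) := fun r hr => by
      simp only [mem_filter, mem_range] at hr ⊢
      exact ⟨by omega, h.trans_le (hμ (by omega))⟩
    simpa [conjP] using card_le_card hsub

theorem conjP_add_ne (hμ : Antitone μ) {i j : ℕ} (hj : j < n) :
    conjP n μ i + μ j ≠ i + j + 1 := by
  rcases lt_or_ge i (μ j) with h | h
  · have := (lt_conjP_iff hμ hj).mpr h
    omega
  · have := mt (lt_conjP_iff hμ hj).mp h.not_gt
    omega

theorem prod_conjP_mul_prod_eq_ascPochhammer_eval (hμ : Antitone μ) (h0 : μ 0 ≤ n) (u : ℂ) :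
    (∏ i : Fin n, (u + conjP n μ i + n - 1 - i)) * ∏ j : Fin n, (u + n + j - μ j)
      = (ascPochhammer ℂ (n + n)).eval u := by
  have hμn : ∀ j, μ j ≤ n := fun j => (hμ (Nat.zero_le j)).trans h0
  let a : Fin n → Fin (n + n) := fun i =>
    ⟨conjP n μ i + (n - 1 - i), by have := conjP_le n μ i; omega⟩
  let b : Fin n → Fin (n + n) := fun j => ⟨n + j - μ j, by have := hμn j; omega⟩
  have ha : Function.Injective a := by
    refine StrictAnti.injective fun i i' h => Fin.lt_def.mpr ?_
    have := conjP_antitone n μ (Fin.le_def.mp h.le)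
    simp only [a]
    omega
  have hb : Function.Injective b := by
    refine StrictMono.injective fun j j' h => Fin.lt_def.mpr ?_
    have := hμ (Fin.le_def.mp h.le)
    have := hμn j
    simp only [b]
    omega
  have hab : ∀ i j, a i ≠ b j := fun i j h => by
    have hne := conjP_add_ne hμ (i := i) j.isLt
    have := hμn j
    have hval := Fin.val_eq_of_eq h
    simp only [a, b] at hval
    omega
  have he : Function.Bijective (Sum.elim a b) :=
    (Fintype.bijective_iff_injective_and_card _).mpr ⟨ha.sumElim hb hab, by simp⟩
  rw [ascPochhammer_eval_eq_prod_range, ← Fin.prod_univ_eq_prod_range (fun s => u + s),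
    ← Fintype.prod_bijective _ he (fun x => u + ((Sum.elim a b x : Fin (n + n)) : ℕ))
      (fun s => u + (s : ℕ)) fun _ => rfl,
    Fintype.prod_sum_type]
  congr 1 <;> refine prod_congr rfl fun i _ => ?_
  · have := i.isLt
    simp only [Sum.elim_inl, a]
    push_cast [Nat.cast_sub (by omega : (i : ℕ) ≤ n - 1), Nat.cast_sub (by omega : 1 ≤ n)]
    ring
  · simp only [Sum.elim_inr, b]
    push_cast [Nat.cast_sub (by have := hμn i; omega : μ i ≤ n + i)]
    ring

end ConjugatePartition

theorem stmt4_general (n k : ℕ) (μ : ℕ → ℕ) (hμ : Antitone μ)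
    (h1 : μ 0 ≤ n) (hkn : k ≤ n) :
    estar n k (fun i => (conjP n μ (i : ℕ) : ℂ))
      = hstar n k (fun i => (μ (i : ℕ) : ℂ)) := by
  let q : ℂ[X] := ∏ j : Fin n, (X + C ((n : ℂ) + j - μ j))
  have hq : q ≠ 0 := (monic_prod_of_monic _ _ fun j _ => monic_X_add_C _).ne_zero
  refine sub_eq_zero.mp (forall_eq_zero_of_sum_antidiagonal_mul_ascPochhammer_eval_mul_eq_zero
    (c := fun k => estar n k (fun i => (conjP n μ i : ℂ)) - hstar n k (fun i => (μ i : ℂ)))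
    hq (fun u => ?_) k hkn)
  have hqu : q.eval u = ∏ j : Fin n, (u + n + j - μ j) := by
    simp only [q, eval_prod, eval_add, eval_X, eval_C, add_sub_assoc, add_assoc]
  simp only [sub_mul, sum_sub_distrib, hqu]
  rw [sum_antidiagonal_estar_mul_ascPochhammer_eval,
    prod_conjP_mul_prod_eq_ascPochhammer_eval hμ h1,
    sum_antidiagonal_hstar_mul_ascPochhammer_eval_mul_prod n n hμ h1, sub_self]

/-- Duality: for a partition `μ` fitting in an `n×n` square,
`e*_k(μ̃₁,…,μ̃ₙ) = h*_k(μ₁,…,μₙ)` for `1 ≤ k ≤ n`. -/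
theorem stmt4 (n k : ℕ) (μ : ℕ → ℕ) (hμ : Antitone μ)
    (h1 : μ 0 ≤ n) (hvan : ∀ i, n ≤ i → μ i = 0) (hconj : conjP n μ 0 ≤ n)
    (hk1 : 1 ≤ k) (hkn : k ≤ n) :
    estar n k (fun i => (conjP n μ (i : ℕ) : ℂ))
      = hstar n k (fun i => (μ (i : ℕ) : ℂ)) :=
  stmt4_general n k μ hμ h1 hkn
end

section
/- Let μ be a partition with μ₁ ≤ n and let 1 ≤ k ≤ n. Then e*_k(μ̃₁,…,μ̃_n) = ∑ over all generalized horizontal strips H of size k in the Ferrers diagram of μ of ∏_r (c_r!), where H is a set of k cells of the diagram of μ with no two cells in the same column and c_r is the number of cells of H in row r. -/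
/-!
Sort the strips by their set of columns `J = {j₁ < ⋯ < j_k}`. Removing the cell in the leftmost
column `j₁` leaves a strip on the other `k - 1` columns; conversely that cell can go in any of the
`μ̃_{j₁}` rows longer than `j₁`, and putting it in a row that already holds `c` cells multiplies
the weight `∏ c_r!` by `c + 1`. Every row of the smaller strip is longer than `j₁`, so summing over
the rows gives the factor `μ̃_{j₁} + (k - 1)`. By induction the strips with columns `J` contribute
`∏_t (μ̃_{j_t} + k - t)`, the term of `e*_k` indexed by `J`.
-/

open scoped Classical

open Finset

noncomputable def rowWeight (n : ℕ) (H : Finset (ℕ × ℕ)) : ℕ :=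
  ∏ r ∈ range n, (#{p ∈ H | p.1 = r}).factorial

noncomputable def columnStrips (n : ℕ) (μ : ℕ → ℕ) (J : Finset ℕ) : Finset (Finset (ℕ × ℕ)) :=
  {H ∈ (range n ×ˢ range n).powerset |
    (∀ p ∈ H, p.2 < μ p.1) ∧ Set.InjOn Prod.snd (H : Set (ℕ × ℕ)) ∧ H.image Prod.snd = J}

lemma rowWeight_insert {n r a : ℕ} {H : Finset (ℕ × ℕ)} (hr : r < n) (h : (r, a) ∉ H) :
    rowWeight n (insert (r, a) H) = (#{p ∈ H | p.1 = r} + 1) * rowWeight n H := by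
  have hr' : r ∈ range n := mem_range.2 hr
  have hrow : ∀ r' ∈ (range n).erase r,
      #{p ∈ insert (r, a) H | p.1 = r'} = #{p ∈ H | p.1 = r'} := by
    intro r' hr'
    rw [filter_insert, if_neg fun h => (ne_of_mem_erase hr') h.symm]
  rw [rowWeight, rowWeight, ← mul_prod_erase _ _ hr', ← mul_prod_erase _ _ hr',
    prod_congr rfl fun r' hr' => congrArg Nat.factorial (hrow r' hr'), filter_insert, if_pos rfl,
    card_insert_of_notMem fun h' => h (mem_filter.1 h').1, Nat.factorial_succ, mul_assoc]

lemma sum_card_row_add_one {H : Finset (ℕ × ℕ)} {V : Finset ℕ} (hH : ∀ p ∈ H, p.1 ∈ V) :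
    ∑ r ∈ V, (#{p ∈ H | p.1 = r} + 1) = #H + #V := by
  rw [sum_add_distrib, ← card_eq_sum_card_fiberwise hH, card_eq_sum_ones V]

section Strips

variable {n : ℕ} {μ : ℕ → ℕ} {J : Finset ℕ} {H : Finset (ℕ × ℕ)} {a r : ℕ}

lemma mem_columnStrips :
    H ∈ columnStrips n μ J ↔ H ⊆ range n ×ˢ range n ∧ (∀ p ∈ H, p.2 < μ p.1) ∧
      Set.InjOn Prod.snd (H : Set (ℕ × ℕ)) ∧ H.image Prod.snd = J := by
  simp [columnStrips]

lemma card_eq_of_mem_columnStrips (hH : H ∈ columnStrips n μ J) : #H = #J := by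
  obtain ⟨-, -, hinj, rfl⟩ := mem_columnStrips.1 hH
  exact (card_image_of_injOn hinj).symm

lemma columnStrips_empty : columnStrips n μ ∅ = {∅} := by
  ext H
  simp only [mem_columnStrips, image_eq_empty, mem_singleton]
  constructor
  · exact fun h => h.2.2.2
  · rintro rfl
    simp

lemma notMem_of_mem_columnStrips (hH : H ∈ columnStrips n μ J) (ha : a ∉ J) (r : ℕ) :
    (r, a) ∉ H := by
  obtain ⟨-, -, -, rfl⟩ := mem_columnStrips.1 hH
  exact fun h => ha (mem_image_of_mem Prod.snd h)

lemma insert_mem_columnStrips (hH : H ∈ columnStrips n μ J) (ha : a ∉ J) (hr : r < n)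
    (han : a < n) (haμ : a < μ r) : insert (r, a) H ∈ columnStrips n μ (insert a J) := by
  have hnot := notMem_of_mem_columnStrips hH ha
  obtain ⟨hsub, hcell, hinj, rfl⟩ := mem_columnStrips.1 hH
  refine mem_columnStrips.2 ⟨insert_subset (by simp [hr, han]) hsub, ?_, ?_, image_insert _ _ _⟩
  · simpa [haμ] using hcell
  · rw [coe_insert, Set.injOn_insert (by simpa using hnot r)]
    refine ⟨hinj, ?_⟩
    rintro ⟨⟨r', a'⟩, hp, rfl : a' = a⟩
    exact hnot r' hp

lemma erase_mem_columnStrips (hH : H ∈ columnStrips n μ (insert a J)) (ha : a ∉ J)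
    {q : ℕ × ℕ} (hq : q ∈ H) (hqa : q.2 = a) : H.erase q ∈ columnStrips n μ J := by
  obtain ⟨hsub, hcell, hinj, himage⟩ := mem_columnStrips.1 hH
  refine mem_columnStrips.2 ⟨(erase_subset _ _).trans hsub,
    fun p hp => hcell p (mem_of_mem_erase hp), hinj.mono (by simp), ?_⟩
  ext j
  constructor
  · simp only [mem_image, mem_erase]
    rintro ⟨p, ⟨hpq, hp⟩, rfl⟩
    have hpJ : p.2 ∈ insert a J := himage ▸ mem_image_of_mem Prod.snd hp
    refine (mem_insert.1 hpJ).resolve_left fun hpa => hpq (hinj hp hq (hpa.trans hqa.symm))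
  · intro hj
    obtain ⟨p, hp, rfl⟩ := mem_image.1 (himage ▸ mem_insert_of_mem hj : j ∈ H.image Prod.snd)
    exact mem_image_of_mem _ (mem_erase.2 ⟨fun hpq => ha (hqa ▸ hpq ▸ hj), hp⟩)

lemma sum_columnStrips_insert {M : Type*} [AddCommMonoid M] (f : Finset (ℕ × ℕ) → M)
    (ha : a ∉ J) (han : a < n) :
    ∑ H ∈ columnStrips n μ (insert a J), f H =
      ∑ r ∈ range n with a < μ r, ∑ H ∈ columnStrips n μ J, f (insert (r, a) H) := by
  rw [← sum_product']
  symm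
  refine sum_bij (fun p _ => insert (p.1, a) p.2) ?_ ?_ ?_ fun _ _ => rfl
  · rintro ⟨r, H⟩ hrH
    obtain ⟨hr, hH⟩ := mem_product.1 hrH
    obtain ⟨hrn, haμ⟩ := mem_filter.1 hr
    exact insert_mem_columnStrips hH ha (mem_range.1 hrn) han haμ
  · rintro ⟨r, H⟩ hrH ⟨r', H'⟩ hrH' heq
    have hH : H ∈ columnStrips n μ J := (mem_product.1 hrH).2
    have hH' : H' ∈ columnStrips n μ J := (mem_product.1 hrH').2
    simp only at heq
    have hr : r = r' := by
      have : (r, a) ∈ insert (r', a) H' := heq ▸ mem_insert_self _ _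
      simpa [notMem_of_mem_columnStrips hH' ha r] using this
    subst hr
    rw [← erase_insert (notMem_of_mem_columnStrips hH ha r), heq,
      erase_insert (notMem_of_mem_columnStrips hH' ha r)]
  · intro H hH
    obtain ⟨hsub, hcell, -, himage⟩ := mem_columnStrips.1 hH
    obtain ⟨q, hq, hqa⟩ := mem_image.1 (himage ▸ mem_insert_self a J : a ∈ H.image Prod.snd)
    refine ⟨(q.1, H.erase q), mem_product.2 ⟨mem_filter.2 ⟨(mem_product.1 (hsub hq)).1, ?_⟩,
      erase_mem_columnStrips hH ha hq hqa⟩, ?_⟩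
    · exact hqa ▸ hcell q hq
    · simp only
      rw [← hqa, insert_erase hq]

lemma sum_rowWeight_columnStrips_insert (haJ : ∀ j ∈ J, a < j) (han : a < n) :
    ∑ H ∈ columnStrips n μ (insert a J), rowWeight n H =
      (conjP n μ a + #J) * ∑ H ∈ columnStrips n μ J, rowWeight n H := by
  have ha : a ∉ J := fun h => lt_irrefl a (haJ a h)
  rw [sum_columnStrips_insert _ ha han, sum_comm, mul_sum]
  refine sum_congr rfl fun H hH => ?_
  have hrows : ∀ p ∈ H, p.1 ∈ {r ∈ range n | a < μ r} := by
    obtain ⟨hsub, hcell, -, himage⟩ := mem_columnStrips.1 hH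
    intro p hp
    have hpJ : p.2 ∈ J := himage ▸ mem_image_of_mem Prod.snd hp
    exact mem_filter.2 ⟨(mem_product.1 (hsub hp)).1, (haJ _ hpJ).trans (hcell p hp)⟩
  calc ∑ r ∈ range n with a < μ r, rowWeight n (insert (r, a) H)
      = ∑ r ∈ range n with a < μ r, (#{p ∈ H | p.1 = r} + 1) * rowWeight n H :=
        sum_congr rfl fun r hr => rowWeight_insert (mem_range.1 (mem_filter.1 hr).1)
          (notMem_of_mem_columnStrips hH ha r)
    _ = (conjP n μ a + #J) * rowWeight n H := by
        rw [← sum_mul, sum_card_row_add_one hrows, card_eq_of_mem_columnStrips hH, add_comm]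
        rfl

theorem sum_rowWeight_columnStrips (hJ : J ⊆ range n) :
    ∑ H ∈ columnStrips n μ J, rowWeight n H = ∏ j ∈ J, (conjP n μ j + #{j' ∈ J | j < j'}) := by
  induction J using induction_on_min with
  | empty => simp [columnStrips_empty, rowWeight]
  | insert a J haJ ih =>
    have ha : a ∉ J := fun h => lt_irrefl a (haJ a h)
    have hJ' : J ⊆ range n := (subset_insert a J).trans hJ
    rw [sum_rowWeight_columnStrips_insert haJ (mem_range.1 (hJ (mem_insert_self a J))), ih hJ',
      prod_insert ha, filter_insert, if_neg (lt_irrefl a), filter_true_of_mem haJ]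
    congr 1
    refine prod_congr rfl fun j hj => ?_
    rw [filter_insert, if_neg (haJ j hj).not_gt]

end Strips

lemma sum_filter_card_eq_sum_powersetCard_columnStrips {M : Type*} [AddCommMonoid M]
    (n k : ℕ) (μ : ℕ → ℕ) (f : Finset (ℕ × ℕ) → M) :
    ∑ H ∈ (range n ×ˢ range n).powerset.filter (fun H : Finset (ℕ × ℕ) => #H = k ∧
        (∀ p ∈ H, p.2 < μ p.1) ∧ ∀ p ∈ H, ∀ q ∈ H, p.2 = q.2 → p = q), f H =
      ∑ J ∈ powersetCard k (range n), ∑ H ∈ columnStrips n μ J, f H := by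
  rw [← sum_fiberwise_of_maps_to (g := image Prod.snd) (t := powersetCard k (range n))]
  · refine sum_congr rfl fun J hJ => sum_congr ?_ fun _ _ => rfl
    ext H
    simp only [mem_filter, mem_columnStrips, mem_powerset]
    constructor
    · rintro ⟨⟨hsub, -, hcell, hinj⟩, himage⟩
      exact ⟨hsub, hcell, fun p hp q hq => hinj p hp q hq, himage⟩
    · rintro ⟨hsub, hcell, hinj, rfl⟩
      refine ⟨⟨hsub, ?_, hcell, fun p hp q hq => hinj hp hq⟩, rfl⟩
      rw [← (mem_powersetCard.1 hJ).2, card_image_of_injOn fun p hp q hq => hinj hp hq]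
  · simp only [mem_filter, mem_powerset, mem_powersetCard]
    rintro H ⟨hsub, rfl, -, hinj⟩
    refine ⟨fun j hj => ?_, card_image_of_injOn fun p hp q hq => hinj p hp q hq⟩
    obtain ⟨p, hp, rfl⟩ := mem_image.1 hj
    exact (mem_product.1 (hsub hp)).2

lemma image_val_subset_range {n k : ℕ} (i : Fin k → Fin n) :
    (univ.image fun t => (i t : ℕ)) ⊆ range n := by
  intro j hj
  obtain ⟨t, -, rfl⟩ := mem_image.1 hj
  exact mem_range.2 (i t).isLt

lemma sum_powersetCard_range_eq_sum_strictMono {M : Type*} [AddCommMonoid M] (n k : ℕ)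
    (f : Finset ℕ → M) :
    ∑ J ∈ powersetCard k (range n), f J =
      ∑ i ∈ univ.filter fun i : Fin k → Fin n => StrictMono i,
        f (univ.image fun t => (i t : ℕ)) := by
  symm
  refine sum_bij (fun i _ => univ.image fun t => (i t : ℕ)) ?_ ?_ ?_ fun _ _ => rfl
  · intro i hi
    have hi' : StrictMono fun t => (i t : ℕ) := Fin.val_strictMono.comp (mem_filter.1 hi).2
    refine mem_powersetCard.2 ⟨image_val_subset_range i, ?_⟩
    rw [card_image_of_injective _ hi'.injective, card_univ, Fintype.card_fin]
  · intro i hi i' hi' heq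
    have hrange := congrArg ((↑) : Finset ℕ → Set ℕ) heq
    simp only [coe_image, coe_univ, Set.image_univ] at hrange
    have := ((Fin.val_strictMono.comp (mem_filter.1 hi).2).range_inj
      (Fin.val_strictMono.comp (mem_filter.1 hi').2)).1 hrange
    exact funext fun t => Fin.ext (congrFun this t)
  · intro J hJ
    obtain ⟨hsub, hcard⟩ := mem_powersetCard.1 hJ
    refine ⟨fun t => ⟨J.orderEmbOfFin hcard t, mem_range.1 (hsub (J.orderEmbOfFin_mem hcard t))⟩,
      mem_filter.2 ⟨mem_univ _, fun _ _ h => (J.orderEmbOfFin hcard).strictMono h⟩, ?_⟩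
    apply coe_injective
    simp only [coe_image, coe_univ, Set.image_univ]
    exact J.range_orderEmbOfFin hcard

lemma card_filter_lt_image_strictMono {k : ℕ} {i : Fin k → ℕ} (hi : StrictMono i) (t : Fin k) :
    #{j ∈ univ.image i | i t < j} = k - 1 - t := by
  rw [filter_image, card_image_of_injective _ hi.injective, ← Fin.card_Ioi]
  congr 1
  ext s
  simp [hi.lt_iff_lt]

theorem stmt5_general (n k : ℕ) (μ : ℕ → ℕ) :
    estar n k (fun i => (conjP n μ (i : ℕ) : ℂ))
      = ((∑ H ∈ (Finset.range n ×ˢ Finset.range n).powerset.filter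
            (fun H : Finset (ℕ × ℕ) => H.card = k ∧ (∀ p ∈ H, p.2 < μ p.1) ∧
              ∀ p ∈ H, ∀ q ∈ H, p.2 = q.2 → p = q),
          ∏ r ∈ Finset.range n, Nat.factorial (H.filter (fun p => p.1 = r)).card : ℕ) : ℂ) := by
  change _ = ((∑ H ∈ _, rowWeight n H : ℕ) : ℂ)
  rw [sum_filter_card_eq_sum_powersetCard_columnStrips, sum_powersetCard_range_eq_sum_strictMono,
    Nat.cast_sum, estar, ← sum_filter]
  refine sum_congr rfl fun i hi => ?_
  have hi' : StrictMono fun t => (i t : ℕ) := Fin.val_strictMono.comp (mem_filter.1 hi).2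
  rw [sum_rowWeight_columnStrips (image_val_subset_range i), prod_image hi'.injective.injOn,
    Nat.cast_prod]
  refine prod_congr rfl fun t _ => ?_
  rw [card_filter_lt_image_strictMono hi', Nat.sub_sub, Nat.cast_add,
    Nat.cast_sub (by omega : 1 + (t : ℕ) ≤ k)]
  push_cast
  ring

/-- `e*_k(μ̃)` equals the sum, over all generalized horizontal strips `H` of size `k`
in the Ferrers diagram of `μ` (cells `(r,c)` with `c < μ r`, no two cells in the same
column), of the product of the factorials of the row counts of `H`. -/
theorem stmt5 (n k : ℕ) (μ : ℕ → ℕ) (hμ : Antitone μ)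
    (h1 : μ 0 ≤ n) (hvan : ∀ i, n ≤ i → μ i = 0)
    (hk1 : 1 ≤ k) (hkn : k ≤ n) :
    estar n k (fun i => (conjP n μ (i : ℕ) : ℂ))
      = ((∑ H ∈ (Finset.range n ×ˢ Finset.range n).powerset.filter
            (fun H : Finset (ℕ × ℕ) => H.card = k ∧ (∀ p ∈ H, p.2 < μ p.1) ∧
              ∀ p ∈ H, ∀ q ∈ H, p.2 = q.2 → p = q),
          ∏ r ∈ Finset.range n, Nat.factorial (H.filter (fun p => p.1 = r)).card : ℕ) : ℂ) :=
  stmt5_general n k μ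
end

section
/- Let μ be a partition with μ₁ ≤ n and let 1 ≤ k ≤ n. Then ∑_{1≤i₁<⋯<i_k≤n} (μ̃_{i₁}+k−1)(μ̃_{i₂}+k−2)⋯(μ̃_{i_k}) = ∑_{1≤i₁<⋯<i_k≤n} ∑_σ Γ_σ(μ; i₁,…,i_k), where the inner sum is over all permutations σ of the set {i₁,…,i_k} and Γ_σ(μ; i₁,…,i_k) = ∏_{j : j is a cycle-maximum of σ} μ̃_j. -/
/-!
Write `σ ∈ Perm (Fin (k+1))` as `decomposeFin.symm (p, e)`: the permutation `e` of the last `k`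
points, shifted up, with `0` then inserted into its cycles just before `p`. Since `0` is the smallest
point, inserting it never changes which of the other points are cycle maxima, and `0` is itself a
cycle maximum exactly when it is a fixed point (`p = 0`). Summing over `p` therefore multiplies by
`x 0 + k`, and induction on `k` gives `∑_σ ∏_{t cycle max} x t = ∏_t (x t + k - 1 - t)`. Applied
to `x t = μ̃_{i_t}` for each increasing tuple `i`, this is the identity term by term.
-/

open scoped Classical

open Finset

namespace Equiv.Perm

variable {α : Type*} [Preorder α]

def IsCycleMax (σ : Perm α) (a : α) : Prop :=
  ∀ m : ℕ, (σ ^ m) a ≤ a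

variable {k : ℕ} (p : Fin (k + 1)) (e : Perm (Fin k)) (i : Fin k)

lemma exists_pow_decomposeFin_symm_apply_succ_eq (m : ℕ) :
    ∃ m' : ℕ, (decomposeFin.symm (p, e) ^ m') i.succ = ((e ^ m) i).succ := by
  set σ := decomposeFin.symm (p, e)
  induction m with
  | zero => exact ⟨0, rfl⟩
  | succ m ih =>
    obtain ⟨m', hm'⟩ := ih
    have hstep : σ ((e ^ m) i).succ = swap 0 p ((e ^ (m + 1)) i).succ := by
      rw [decomposeFin_symm_apply_succ, pow_succ', mul_apply]
    by_cases hp : ((e ^ (m + 1)) i).succ = p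
    · have hzero : (σ ^ (m' + 1)) i.succ = 0 := by
        rw [pow_succ', mul_apply, hm', hstep, hp, swap_apply_right]
      refine ⟨m' + 2, ?_⟩
      rw [pow_succ', mul_apply, hzero, decomposeFin_symm_apply_zero, hp]
    · refine ⟨m' + 1, ?_⟩
      rw [pow_succ', mul_apply, hm', hstep, swap_apply_of_ne_of_ne (Fin.succ_ne_zero _) hp]

lemma pow_decomposeFin_symm_apply_succ_eq_or (m : ℕ) :
    (∃ m' : ℕ, (decomposeFin.symm (p, e) ^ m) i.succ = ((e ^ m') i).succ) ∨
      ((decomposeFin.symm (p, e) ^ m) i.succ = 0 ∧ ∃ m' : ℕ, p = ((e ^ m') i).succ) := by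
  set σ := decomposeFin.symm (p, e)
  induction m with
  | zero => exact Or.inl ⟨0, rfl⟩
  | succ m ih =>
    rcases ih with ⟨m', hm'⟩ | ⟨hzero, m', hp⟩
    · have hstep : σ ((e ^ m') i).succ = swap 0 p ((e ^ (m' + 1)) i).succ := by
        rw [decomposeFin_symm_apply_succ, pow_succ', mul_apply]
      by_cases hp : ((e ^ (m' + 1)) i).succ = p
      · refine Or.inr ⟨?_, m' + 1, hp.symm⟩
        rw [pow_succ', mul_apply, hm', hstep, hp, swap_apply_right]
      · refine Or.inl ⟨m' + 1, ?_⟩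
        rw [pow_succ', mul_apply, hm', hstep, swap_apply_of_ne_of_ne (Fin.succ_ne_zero _) hp]
    · exact Or.inl ⟨m', by rw [pow_succ', mul_apply, hzero, decomposeFin_symm_apply_zero, hp]⟩

lemma isCycleMax_decomposeFin_symm_succ_iff :
    (decomposeFin.symm (p, e)).IsCycleMax i.succ ↔ e.IsCycleMax i := by
  constructor
  · intro h m
    obtain ⟨m', hm'⟩ := exists_pow_decomposeFin_symm_apply_succ_eq p e i m
    simpa [hm'] using h m'
  · intro h m
    rcases pow_decomposeFin_symm_apply_succ_eq_or p e i m with ⟨m', hm'⟩ | ⟨hzero, -⟩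
    · rw [hm', Fin.succ_le_succ_iff]
      exact h m'
    · rw [hzero]
      exact Fin.zero_le _

lemma isCycleMax_decomposeFin_symm_zero_iff :
    (decomposeFin.symm (p, e)).IsCycleMax 0 ↔ p = 0 := by
  constructor
  · intro h
    simpa using h 1
  · rintro rfl m
    induction m with
    | zero => exact le_rfl
    | succ m ih =>
      rw [pow_succ', mul_apply, Fin.le_zero_iff.mp ih, decomposeFin_symm_apply_zero]

end Equiv.Perm

open Equiv.Perm in
lemma sum_perm_prod_ite_isCycleMax {R : Type*} [CommRing R] (k : ℕ) (x : Fin k → R) :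
    ∑ σ : Equiv.Perm (Fin k), ∏ t, (if σ.IsCycleMax t then x t else 1)
      = ∏ t : Fin k, (x t + ((k : R) - 1 - (t : ℕ))) := by
  induction k with
  | zero => simp
  | succ k ih =>
    have hinsert : ∀ p e, ∏ t, (if (decomposeFin.symm (p, e)).IsCycleMax t then x t else 1)
        = (if p = 0 then x 0 else 1) * ∏ t : Fin k, (if e.IsCycleMax t then x t.succ else 1) := by
      intro p e
      simp only [Fin.prod_univ_succ, isCycleMax_decomposeFin_symm_zero_iff,
        isCycleMax_decomposeFin_symm_succ_iff]
    calc ∑ σ : Equiv.Perm (Fin (k + 1)), ∏ t, (if σ.IsCycleMax t then x t else 1)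
        = ∑ p : Fin (k + 1), ∑ e : Equiv.Perm (Fin k),
            ∏ t, (if (decomposeFin.symm (p, e)).IsCycleMax t then x t else 1) := by
          rw [← Fintype.sum_prod_type', ← Equiv.sum_comp decomposeFin.symm]
      _ = (∑ p : Fin (k + 1), if p = 0 then x 0 else 1) *
            ∑ e : Equiv.Perm (Fin k), ∏ t, (if e.IsCycleMax t then x t.succ else 1) := by
          simp only [hinsert, Finset.sum_mul_sum]
      _ = (x 0 + k) * ∏ t : Fin k, (x t.succ + ((k : R) - 1 - (t : ℕ))) := by
          rw [ih, Fin.sum_univ_succ]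
          simp [Fin.succ_ne_zero]
      _ = ∏ t : Fin (k + 1), (x t + (((k + 1 : ℕ) : R) - 1 - (t : ℕ))) := by
          rw [Fin.prod_univ_succ]
          push_cast [Fin.val_zero, Fin.val_succ]
          congr 1
          · ring
          · exact prod_congr rfl fun t _ => by ring

theorem stmt7_general (n k : ℕ) (μ : ℕ → ℕ) :
    estar n k (fun i => (conjP n μ (i : ℕ) : ℂ))
      = ∑ i : Fin k → Fin n, if StrictMono i then
          ∑ σ : Equiv.Perm (Fin k),
            ∏ t : Fin k,
              (if ∀ m : ℕ, (σ ^ m) t ≤ t then (conjP n μ ((i t : ℕ)) : ℂ) else 1)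
        else 0 := by
  refine Finset.sum_congr rfl fun i _ => ?_
  split
  · exact (sum_perm_prod_ite_isCycleMax k fun t => (conjP n μ (i t : ℕ) : ℂ)).symm
  · rfl

/-- `e*_k(μ̃)` equals the double sum over strictly increasing `k`-tuples `i₁<⋯<i_k` and
permutations `σ` of `{i₁,…,i_k}` of `Γ_σ(μ; i₁,…,i_k) = ∏_{cycle-maxima j of σ} μ̃_j`. -/
theorem stmt7 (n k : ℕ) (μ : ℕ → ℕ) (hμ : Antitone μ)
    (h1 : μ 0 ≤ n) (hvan : ∀ i, n ≤ i → μ i = 0)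
    (hk1 : 1 ≤ k) (hkn : k ≤ n) :
    estar n k (fun i => (conjP n μ (i : ℕ) : ℂ))
      = ∑ i : Fin k → Fin n, if StrictMono i then
          ∑ σ : Equiv.Perm (Fin k),
            ∏ t : Fin k,
              (if ∀ m : ℕ, (σ ^ m) t ≤ t then (conjP n μ ((i t : ℕ)) : ℂ) else 1)
        else 0 :=
  stmt7_general n k μ
end

section
/- If μ is a partition with μ₁ < k, then e*_k(μ̃₁,…,μ̃_n) = 0, where e*_k is the k-th elementary shifted symmetric polynomial and μ̃ is the conjugate of μ padded with zeros to n ≥ k entries. -/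
open scoped Classical

/-! A strictly increasing `i` has `k - 1 ≤ i (k - 1)`, and there the shift of the last factor of
`e*_k` vanishes; so `e*_k(x) = 0` as soon as `x` vanishes from index `k - 1` on. For `x = μ̃` this
holds because `μ̃_j = 0` once `j ≥ μ₁`, and `μ₁ < k`. -/

open Finset

lemma Fin.val_le_val_of_strictMono {k n : ℕ} {f : Fin k → Fin n} (hf : StrictMono f)
    (t : Fin k) : (t : ℕ) ≤ f t :=
  calc (t : ℕ) = #(Iio t) := (Fin.card_Iio t).symm
    _ ≤ #(Iio (f t)) :=
      card_le_card_of_injOn f (fun _ ha => by simpa using hf (by simpa using ha))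
        hf.injective.injOn
    _ = f t := Fin.card_Iio _

lemma estar_eq_zero_of_forall_le_eq_zero {n k : ℕ} (hk : 0 < k) (x : Fin n → ℂ)
    (hx : ∀ j : Fin n, k - 1 ≤ (j : ℕ) → x j = 0) : estar n k x = 0 := by
  refine sum_eq_zero fun i _ => ?_
  split_ifs with hi
  · let last : Fin k := ⟨k - 1, by omega⟩
    refine prod_eq_zero (mem_univ last) ?_
    rw [hx _ (Fin.val_le_val_of_strictMono hi last)]
    simp [last, Nat.cast_sub (Nat.one_le_iff_ne_zero.mpr hk.ne')]
  · rfl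

lemma conjP_eq_zero_of_forall_le {n j : ℕ} {μ : ℕ → ℕ} (h : ∀ i, μ i ≤ j) : conjP n μ j = 0 := by
  rw [conjP, card_eq_zero, filter_eq_empty_iff]
  exact fun i _ => by linarith [h i]

theorem stmt8_general (n k : ℕ) (μ : ℕ → ℕ) (hμ : Antitone μ)
    (hsmall : μ 0 < k) :
    estar n k (fun i => (conjP n μ (i : ℕ) : ℂ)) = 0 := by
  refine estar_eq_zero_of_forall_le_eq_zero (by omega) _ fun j hj => ?_
  have hμ_le : ∀ i, μ i ≤ j := fun i => (hμ (Nat.zero_le i)).trans (by omega)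
  simp [conjP_eq_zero_of_forall_le hμ_le]

/-- If `μ₁ < k` then `e*_k(μ̃₁,…,μ̃ₙ) = 0`. -/
theorem stmt8 (n k : ℕ) (μ : ℕ → ℕ) (hμ : Antitone μ)
    (hvan : ∀ i, n ≤ i → μ i = 0) (hkn : k ≤ n)
    (hsmall : μ 0 < k) :
    estar n k (fun i => (conjP n μ (i : ℕ) : ℂ)) = 0 :=
  stmt8_general n k μ hμ hsmall
end

section
/- For n ≥ 1, the polynomials e*_1(x₁,…,x_n), …, e*_n(x₁,…,x_n) are algebraically independent over ℂ, and they generate the algebra Λ*(n) of shifted symmetric polynomials in n variables as a polynomial algebra. -/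
open scoped Classical
open MvPolynomial

set_option maxHeartbeats 1000000

/-- The `k`-th elementary shifted symmetric polynomial, as a polynomial. -/
noncomputable def estarP (n k : ℕ) : MvPolynomial (Fin n) ℂ :=
  ∑ i : Fin k → Fin n, if StrictMono i then
    ∏ t : Fin k, (X (i t) + C ((k : ℂ) - 1 - ((t : ℕ) : ℂ))) else 0

/-- A polynomial is shifted symmetric if it is invariant under replacing
`(x_i, x_{i+1})` by `(x_{i+1} − 1, x_i + 1)` for each `i`. -/
def shiftedSym (n : ℕ) (f : MvPolynomial (Fin n) ℂ) : Prop :=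
  ∀ (x : Fin n → ℂ) (i : Fin n) (h : (i : ℕ) + 1 < n),
    eval x f = eval (fun j =>
      if j = i then x ⟨(i : ℕ) + 1, h⟩ - 1
      else if j = ⟨(i : ℕ) + 1, h⟩ then x i + 1
      else x j) f

/-! ### Stirling numbers of the second kind (as complex numbers) -/

noncomputable def St : ℕ → ℕ → ℂ
  | 0, 0 => 1
  | 0, _ + 1 => 0
  | _ + 1, 0 => 0
  | n + 1, k + 1 => ((k : ℂ) + 1) * St n (k + 1) + St n k

lemma St_eq_zero : ∀ {n k : ℕ}, n < k → St n k = 0 := by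
  intro n
  induction n with
  | zero => intro k hk; obtain ⟨m, rfl⟩ := Nat.exists_eq_add_of_lt hk; rfl
  | succ n ih =>
    intro k hk
    obtain ⟨m, rfl⟩ : ∃ m, k = m + 1 := ⟨k - 1, (Nat.succ_pred_eq_of_pos (Nat.lt_of_lt_of_le (Nat.succ_pos n) hk.le)).symm⟩
    have h1 : n < m + 1 := by omega
    have h2 : n < m := by omega
    rw [St, ih h1, ih h2]
    ring

lemma St_self (n : ℕ) : St n n = 1 := by
  induction n with
  | zero => rfl
  | succ n ih =>
    rw [St, ih, St_eq_zero n.lt_succ_self]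
    ring

/-- The connection coefficients. -/
noncomputable def Dc (n k j : ℕ) : ℂ := (-1 : ℂ) ^ (k - j) * St (n - j) (n - k)

lemma Dc_self (n k : ℕ) : Dc n k k = 1 := by
  simp [Dc, St_self]

/-! ### A generic family of polynomials given by sums over strictly monotone tuples -/

noncomputable def Gfam (n k : ℕ) (c : ℕ → ℕ → ℂ) : MvPolynomial (Fin n) ℂ :=
  ∑ i : Fin k → Fin n, if StrictMono i then
    ∏ t : Fin k, (X (i t) + C (c (t : ℕ) ((i t : ℕ)))) else 0

lemma estarP_eq_Gfam (n k : ℕ) :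
    estarP n k = Gfam n k (fun t _ => (k : ℂ) - 1 - (t : ℂ)) := rfl

/-- The substituted elementary symmetric polynomials `e_j(u)`, `u_i = x_i + (n-1-i)`. -/
noncomputable def Usym (n j : ℕ) : MvPolynomial (Fin n) ℂ :=
  Gfam n j (fun _ v => (n : ℂ) - 1 - (v : ℂ))

lemma Gfam_zero (n : ℕ) (c : ℕ → ℕ → ℂ) : Gfam n 0 c = 1 := by
  have h : ∀ i : Fin 0 → Fin n, StrictMono i := fun i => Subsingleton.strictMono i
  simp [Gfam, h]

lemma Gfam_eq_zero_of_gt {n k : ℕ} (h : n < k) (c : ℕ → ℕ → ℂ) : Gfam n k c = 0 := by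
  rw [Gfam]
  apply Finset.sum_eq_zero
  intro i _
  rw [if_neg]
  intro hmono
  have := Fintype.card_le_of_injective i hmono.injective
  simp only [Fintype.card_fin] at this
  omega

lemma strictMono_succ_comp {n k : ℕ} (j : Fin k → Fin n) :
    StrictMono (Fin.succ ∘ j) ↔ StrictMono j := by
  constructor
  · intro h a b hab
    have := h hab
    simpa only [Function.comp_apply, Fin.succ_lt_succ_iff] using this
  · intro h a b hab
    simpa only [Function.comp_apply, Fin.succ_lt_succ_iff] using h hab

lemma strictMono_cons_zero {n k : ℕ} (j : Fin k → Fin n) :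
    StrictMono (Fin.cons 0 (Fin.succ ∘ j) : Fin (k + 1) → Fin (n + 1)) ↔ StrictMono j := by
  constructor
  · intro h a b hab
    have := h (show a.succ < b.succ from Fin.succ_lt_succ_iff.mpr hab)
    simpa only [Fin.cons_succ, Function.comp_apply, Fin.succ_lt_succ_iff] using this
  · intro h a b hab
    induction b using Fin.cases with
    | zero => exact absurd hab (Fin.not_lt_zero a)
    | succ b =>
      induction a using Fin.cases with
      | zero =>
        simp only [Fin.cons_zero, Fin.cons_succ, Function.comp_apply]
        exact Fin.succ_pos _
      | succ a =>
        have hab' : a < b := by simpa only [Fin.succ_lt_succ_iff] using hab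
        simpa only [Fin.cons_succ, Function.comp_apply, Fin.succ_lt_succ_iff] using h hab'

lemma Gfam_succ (n k : ℕ) (c : ℕ → ℕ → ℂ) :
    Gfam (n + 1) (k + 1) c
      = (X 0 + C (c 0 0)) * rename Fin.succ (Gfam n k (fun t v => c (t + 1) (v + 1)))
        + rename Fin.succ (Gfam n (k + 1) (fun t v => c t (v + 1))) := by
  classical
  set F1 : (Fin k → Fin n) → (Fin (k + 1) → Fin (n + 1)) :=
    fun j => Fin.cons 0 (Fin.succ ∘ j) with hF1
  set F2 : (Fin (k + 1) → Fin n) → (Fin (k + 1) → Fin (n + 1)) :=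
    fun j => Fin.succ ∘ j with hF2
  have hF1inj : Function.Injective F1 := by
    intro a b hab
    funext t
    have := congrFun hab t.succ
    simp only [hF1, Fin.cons_succ, Function.comp_apply] at this
    exact Fin.succ_injective _ this
  have hF2inj : Function.Injective F2 := by
    intro a b hab
    funext t
    exact Fin.succ_injective _ (congrFun hab t)
  set T : (Fin (k + 1) → Fin (n + 1)) → MvPolynomial (Fin (n + 1)) ℂ := fun i =>
    if StrictMono i then ∏ t : Fin (k + 1), (X (i t) + C (c (t : ℕ) ((i t : ℕ)))) else 0 with hT
  have hd : Disjoint (Finset.image F1 Finset.univ) (Finset.image F2 Finset.univ) := by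
    rw [Finset.disjoint_left]
    rintro i hi1 hi2
    obtain ⟨j1, _, rfl⟩ := Finset.mem_image.mp hi1
    obtain ⟨j2, _, h2⟩ := Finset.mem_image.mp hi2
    have := congrFun h2 0
    simp only [hF1, hF2, Fin.cons_zero, Function.comp_apply] at this
    exact Fin.succ_ne_zero _ this
  have key : Gfam (n + 1) (k + 1) c
      = ∑ i ∈ Finset.image F1 Finset.univ ∪ Finset.image F2 Finset.univ, T i := by
    rw [Gfam]
    refine (Finset.sum_subset (Finset.subset_univ _) ?_).symm
    intro i _ hni
    rw [if_neg]
    intro hmono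
    apply hni
    rw [Finset.mem_union]
    by_cases h0 : i 0 = 0
    · left
      have hpos : ∀ t : Fin k, i t.succ ≠ 0 := by
        intro t
        have : i 0 < i t.succ := hmono (Fin.succ_pos t)
        rw [h0] at this
        exact Fin.pos_iff_ne_zero.mp this
      refine Finset.mem_image.mpr ⟨fun t => (i t.succ).pred (hpos t), Finset.mem_univ _, ?_⟩
      funext a
      induction a using Fin.cases with
      | zero => simp [hF1, h0]
      | succ a => simp [hF1]
    · right
      have hpos : ∀ t, i t ≠ 0 := by
        intro t ht
        apply h0
        have h01 : i 0 ≤ i t := hmono.monotone (Fin.zero_le t)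
        rw [ht] at h01
        exact Fin.le_zero_iff.mp h01
      refine Finset.mem_image.mpr ⟨fun t => (i t).pred (hpos t), Finset.mem_univ _, ?_⟩
      funext t
      simp [hF2]
  rw [key, Finset.sum_union hd,
    Finset.sum_image (fun a _ b _ h => hF1inj h),
    Finset.sum_image (fun a _ b _ h => hF2inj h)]
  congr 1
  · rw [Gfam, map_sum, Finset.mul_sum]
    refine Finset.sum_congr rfl fun j _ => ?_
    rw [apply_ite (rename (R := ℂ) Fin.succ), map_zero, mul_ite, mul_zero]
    simp only [hT, hF1]
    by_cases hj : StrictMono j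
    · rw [if_pos ((strictMono_cons_zero j).mpr hj), if_pos hj, Fin.prod_univ_succ, map_prod]
      simp [Fin.val_succ]
    · rw [if_neg (fun hmono => hj ((strictMono_cons_zero j).mp hmono)), if_neg hj]
  · rw [Gfam, map_sum]
    refine Finset.sum_congr rfl fun j _ => ?_
    rw [apply_ite (rename (R := ℂ) Fin.succ), map_zero]
    simp only [hT, hF2]
    by_cases hj : StrictMono j
    · rw [if_pos ((strictMono_succ_comp j).mpr hj), if_pos hj, map_prod]
      refine Finset.prod_congr rfl fun t _ => ?_
      simp [hF2, Fin.val_succ]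
    · rw [if_neg (fun hmono => hj ((strictMono_succ_comp j).mp hmono)), if_neg hj]

/-- Sums over strictly monotone tuples equal sums over `k`-subsets. -/
lemma sum_strictMono_eq {A : Type*} [CommRing A] (n k : ℕ) (g : Fin n → A) :
    (∑ i : Fin k → Fin n, if StrictMono i then ∏ t : Fin k, g (i t) else 0)
      = ∑ s ∈ Finset.powersetCard k Finset.univ, ∏ v ∈ s, g v := by
  rw [← Finset.sum_filter]
  refine Finset.sum_bij' (fun fn _ => Finset.image fn Finset.univ)
    (fun s hs => fun t => s.orderEmbOfFin (Finset.mem_powersetCard_univ.mp hs) t)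
    ?_ ?_ ?_ ?_ ?_
  · intro fn hfn
    rw [Finset.mem_filter] at hfn
    rw [Finset.mem_powersetCard_univ,
      Finset.card_image_of_injective _ hfn.2.injective, Finset.card_univ, Fintype.card_fin]
  · intro s hs
    rw [Finset.mem_filter]
    exact ⟨Finset.mem_univ _, (s.orderEmbOfFin _).strictMono⟩
  · intro fn hfn
    rw [Finset.mem_filter] at hfn
    funext t
    exact (congrFun (Finset.orderEmbOfFin_unique _
      (fun x => Finset.mem_image_of_mem fn (Finset.mem_univ x)) hfn.2) t).symm
  · intro s hs
    apply Finset.coe_injective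
    rw [Finset.coe_image, Finset.coe_univ, Set.image_univ, Finset.range_orderEmbOfFin]
  · intro fn hfn
    rw [Finset.mem_filter] at hfn
    exact (Finset.prod_image (fun x _ y _ h => hfn.2.injective h)).symm

lemma Usym_eq_aeval (n j : ℕ) :
    Usym n j = aeval (fun i : Fin n => X i + C ((n : ℂ) - 1 - (i : ℕ))) (esymm (Fin n) ℂ j) := by
  rw [Usym, Gfam,
    sum_strictMono_eq n j (fun v : Fin n => X v + C ((n : ℂ) - 1 - ((v : ℕ) : ℂ))), esymm, map_sum]
  refine Finset.sum_congr rfl fun s _ => ?_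
  rw [map_prod]
  refine Finset.prod_congr rfl fun v _ => ?_
  simp

/-! ### Recursions for `estarP` and `Usym` -/

lemma Gfam_congr {n k : ℕ} {c c' : ℕ → ℕ → ℂ} (h : ∀ t v, c t v = c' t v) :
    Gfam n k c = Gfam n k c' := by
  have : c = c' := funext fun t => funext fun v => h t v
  rw [this]

lemma estarP_zero (n : ℕ) : estarP n 0 = 1 := by rw [estarP_eq_Gfam, Gfam_zero]

lemma estarP_gt {n k : ℕ} (h : n < k) : estarP n k = 0 := by
  rw [estarP_eq_Gfam]; exact Gfam_eq_zero_of_gt h _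

lemma Usym_zero (n : ℕ) : Usym n 0 = 1 := Gfam_zero n _

lemma Usym_gt {n k : ℕ} (h : n < k) : Usym n k = 0 := Gfam_eq_zero_of_gt h _

lemma estarP_succ (n k : ℕ) :
    estarP (n + 1) (k + 1) = (X 0 + C (k : ℂ)) * rename Fin.succ (estarP n k)
      + rename Fin.succ (estarP n (k + 1)) := by
  rw [estarP_eq_Gfam, Gfam_succ]
  have h0 : ((k + 1 : ℕ) : ℂ) - 1 - ((0 : ℕ) : ℂ) = (k : ℂ) := by push_cast; ring
  have h1 : Gfam n k (fun t v => ((k + 1 : ℕ) : ℂ) - 1 - ((t + 1 : ℕ) : ℂ))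
      = estarP n k := by
    rw [estarP_eq_Gfam]
    exact Gfam_congr fun t v => by push_cast; ring
  have h2 : Gfam n (k + 1) (fun t v => ((k + 1 : ℕ) : ℂ) - 1 - ((t : ℕ) : ℂ))
      = estarP n (k + 1) := by
    rw [estarP_eq_Gfam]
  rw [h0, h1, h2]

lemma Usym_succ (n j : ℕ) :
    Usym (n + 1) (j + 1) = (X 0 + C (n : ℂ)) * rename Fin.succ (Usym n j)
      + rename Fin.succ (Usym n (j + 1)) := by
  rw [Usym, Gfam_succ]
  have h0 : ((n + 1 : ℕ) : ℂ) - 1 - ((0 : ℕ) : ℂ) = (n : ℂ) := by push_cast; ring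
  have h1 : Gfam n j (fun t v => ((n + 1 : ℕ) : ℂ) - 1 - ((v + 1 : ℕ) : ℂ))
      = Usym n j := by
    rw [Usym]
    exact Gfam_congr fun t v => by push_cast; ring
  have h2 : Gfam n (j + 1) (fun t v => ((n + 1 : ℕ) : ℂ) - 1 - ((v + 1 : ℕ) : ℂ))
      = Usym n (j + 1) := by
    rw [Usym]
    exact Gfam_congr fun t v => by push_cast; ring
  rw [h0, h1, h2]

/-! ### Coefficient identities -/

lemma Dc_shift (n k j : ℕ) : Dc (n + 1) (k + 1) (j + 1) = Dc n k j := by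
  simp [Dc, Nat.succ_sub_succ]

lemma Dc_top_zero {n k j : ℕ} (hjn : j ≤ n) (hkj : k < j) : Dc n k j = 0 := by
  have h : n - j < n - k := by omega
  simp [Dc, St_eq_zero h]

lemma Dc_diag_zero {n j : ℕ} (h : j < n) : Dc n n j = 0 := by
  have h1 : n - j = (n - j - 1) + 1 := by omega
  rw [Dc, Nat.sub_self, h1, St]
  ring

lemma Dc_rec {n k m : ℕ} (hm : m ≤ k + 1) (hk : k < n) :
    Dc (n + 1) (k + 1) m = Dc n (k + 1) m - ((n - k : ℕ) : ℂ) * Dc n k m := by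
  rcases Nat.lt_or_ge m (k + 1) with h | h
  · have hmk : m ≤ k := by omega
    have e1 : n + 1 - m = (n - m) + 1 := by omega
    have e2 : n + 1 - (k + 1) = ((n - k - 1) : ℕ) + 1 := by omega
    have e3 : n - (k + 1) = n - k - 1 := by omega
    have e4 : (k + 1) - m = (k - m) + 1 := by omega
    have e5 : ((n - k - 1 : ℕ) : ℂ) + 1 = ((n - k : ℕ) : ℂ) := by
      have : n - k - 1 + 1 = n - k := by omega
      rw [← this]; push_cast; ring
    have e6 : n - k - 1 + 1 = n - k := by omega
    rw [Dc, Dc, Dc, e1, e2, e3, e4, St, e6, e5]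
    ring
  · have hm' : m = k + 1 := by omega
    subst hm'
    rw [Dc_self, Dc_self, Dc_top_zero (by omega) k.lt_succ_self]
    ring

/-! ### The master identity -/

lemma estar_diag (n : ℕ) : estarP n n = Usym n n := by
  induction n with
  | zero => rw [estarP_zero, Usym_zero]
  | succ n ih =>
    rw [estarP_succ, Usym_succ, ih, estarP_gt n.lt_succ_self, Usym_gt n.lt_succ_self]

lemma master : ∀ n k, k ≤ n →
    estarP n k = ∑ j ∈ Finset.range (k + 1), Dc n k j • Usym n j := by
  intro n
  induction n with
  | zero =>
    intro k hk
    have : k = 0 := Nat.le_zero.mp hk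
    subst this
    simp [estarP_zero, Usym_zero, Dc_self]
  | succ n ih =>
    intro k hk
    match k with
    | 0 => simp [estarP_zero, Usym_zero, Dc_self]
    | k + 1 =>
      rcases Nat.lt_or_ge k n with hkn | hkn
      · -- k + 1 ≤ n
        have hk' : k ≤ n := hkn.le
        have hk1 : k + 1 ≤ n := hkn
        have hD : ∑ j ∈ Finset.range (k + 1), Dc n k j • rename Fin.succ (Usym n j)
            = rename Fin.succ (estarP n k) := by
          rw [ih k hk', map_sum]
          exact Finset.sum_congr rfl fun j _ => by rw [map_smul]
        have hC : ∑ m ∈ Finset.range (k + 2), Dc n (k + 1) m • rename Fin.succ (Usym n m)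
            = rename Fin.succ (estarP n (k + 1)) := by
          rw [ih (k + 1) hk1, map_sum]
          exact Finset.sum_congr rfl fun j _ => by rw [map_smul]
        have hB : ∑ m ∈ Finset.range (k + 2), Dc (n + 1) (k + 1) m • rename Fin.succ (Usym n m)
            = ∑ m ∈ Finset.range (k + 2), Dc n (k + 1) m • rename Fin.succ (Usym n m)
              - ((n - k : ℕ) : ℂ) • ∑ j ∈ Finset.range (k + 1), Dc n k j • rename Fin.succ (Usym n j) := by
          have step : ∀ m ∈ Finset.range (k + 2),
              Dc (n + 1) (k + 1) m • rename Fin.succ (Usym n m)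
                = Dc n (k + 1) m • rename Fin.succ (Usym n m)
                  - ((n - k : ℕ) : ℂ) • (Dc n k m • rename Fin.succ (Usym n m)) := by
            intro m hm
            rw [Finset.mem_range] at hm
            rw [Dc_rec (by omega) hkn, sub_smul, smul_smul]
          rw [Finset.sum_congr rfl step, Finset.sum_sub_distrib, ← Finset.smul_sum]
          congr 2
          rw [Finset.sum_range_succ, Dc_top_zero (by omega) k.lt_succ_self, zero_smul, add_zero]
        have hA : ∑ m ∈ Finset.range (k + 2), Dc (n + 1) (k + 1) m • Usym (n + 1) m
            = (X 0 + C (n : ℂ)) * ∑ j ∈ Finset.range (k + 1), Dc n k j • rename Fin.succ (Usym n j)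
              + ∑ m ∈ Finset.range (k + 2), Dc (n + 1) (k + 1) m • rename Fin.succ (Usym n m) := by
          rw [Finset.sum_range_succ' (fun m => Dc (n + 1) (k + 1) m • Usym (n + 1) m) (k + 1)]
          conv_rhs => rw [Finset.sum_range_succ'
            (fun m => Dc (n + 1) (k + 1) m • rename Fin.succ (Usym n m)) (k + 1)]
          simp only [Usym_succ, Usym_zero, map_one, Dc_shift, smul_add, mul_smul_comm]
          rw [Finset.sum_add_distrib, Finset.mul_sum]
          simp only [mul_smul_comm]
          abel
        rw [estarP_succ, hA, hB, hC, hD]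
        have hcast : (k : ℂ) = (n : ℂ) - ((n - k : ℕ) : ℂ) := by
          rw [Nat.cast_sub hk']; ring
        rw [MvPolynomial.smul_eq_C_mul, hcast, map_sub]
        push_cast
        ring
      · -- k = n
        have hke : k = n := le_antisymm (Nat.succ_le_succ_iff.mp hk) hkn
        subst hke
        rw [estar_diag, Finset.sum_range_succ, Dc_self, one_smul]
        have : ∀ j ∈ Finset.range (k + 1), Dc (k + 1) (k + 1) j • Usym (k + 1) j = 0 := by
          intro j hj
          rw [Finset.mem_range] at hj
          rw [Dc_diag_zero (by omega), zero_smul]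
        rw [Finset.sum_congr rfl this, Finset.sum_const_zero, zero_add]

/-! ### The shift automorphism -/

noncomputable def Sh (n : ℕ) : MvPolynomial (Fin n) ℂ →ₐ[ℂ] MvPolynomial (Fin n) ℂ :=
  aeval (fun i : Fin n => X i + C ((i : ℕ) - ((n : ℂ) - 1)))

noncomputable def ShInv (n : ℕ) : MvPolynomial (Fin n) ℂ →ₐ[ℂ] MvPolynomial (Fin n) ℂ :=
  aeval (fun i : Fin n => X i - C ((i : ℕ) - ((n : ℂ) - 1)))

lemma ShInv_comp_Sh (n : ℕ) : (ShInv n).comp (Sh n) = AlgHom.id ℂ _ := by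
  apply MvPolynomial.algHom_ext
  intro i
  simp [Sh, ShInv, algebraMap_eq]

lemma Sh_comp_ShInv (n : ℕ) : (Sh n).comp (ShInv n) = AlgHom.id ℂ _ := by
  apply MvPolynomial.algHom_ext
  intro i
  simp [Sh, ShInv, algebraMap_eq]

lemma ShInv_Sh (n : ℕ) (f : MvPolynomial (Fin n) ℂ) : ShInv n (Sh n f) = f := by
  have := AlgHom.congr_fun (ShInv_comp_Sh n) f
  simpa using this

lemma Sh_ShInv (n : ℕ) (f : MvPolynomial (Fin n) ℂ) : Sh n (ShInv n f) = f := by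
  have := AlgHom.congr_fun (Sh_comp_ShInv n) f
  simpa using this

lemma Sh_Usym (n j : ℕ) : Sh n (Usym n j) = esymm (Fin n) ℂ j := by
  rw [Usym_eq_aeval, ← AlgHom.comp_apply, comp_aeval]
  have h : (fun i : Fin n => Sh n (X i + C ((n : ℂ) - 1 - ((i : ℕ) : ℂ))))
      = (X : Fin n → MvPolynomial (Fin n) ℂ) := by
    funext i
    rw [map_add, Sh, aeval_X, aeval_C, algebraMap_eq, add_assoc, ← map_add]
    have h0 : ((i : ℕ) : ℂ) - ((n : ℂ) - 1) + ((n : ℂ) - 1 - ((i : ℕ) : ℂ)) = 0 := by ring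
    rw [h0, map_zero, add_zero]
  rw [h, aeval_X_left, AlgHom.id_apply]

lemma Sh_estarP (n k : ℕ) (hk : k ≤ n) :
    Sh n (estarP n k) = ∑ j ∈ Finset.range (k + 1), Dc n k j • esymm (Fin n) ℂ j := by
  rw [master n k hk, map_sum]
  exact Finset.sum_congr rfl fun j _ => by rw [map_smul, Sh_Usym]

/-! ### shifted symmetric iff shift is symmetric -/

lemma eval_aeval_fam (n : ℕ) (v : Fin n → ℂ) (g : Fin n → MvPolynomial (Fin n) ℂ)
    (f : MvPolynomial (Fin n) ℂ) :
    eval v (aeval g f) = eval (fun i => eval v (g i)) f := by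
  have hae : ∀ (w : Fin n → ℂ) (p : MvPolynomial (Fin n) ℂ), eval w p = aeval w p := by
    intro w p
    rw [← coe_aeval_eq_eval]
    rfl
  rw [hae (fun i => eval v (g i)) f, hae v (aeval g f), ← AlgHom.comp_apply, comp_aeval]
  have hvec : (fun i => aeval v (g i)) = fun i => eval v (g i) := by
    funext i
    rw [hae]
  rw [hvec]

lemma eval_Sh (n : ℕ) (v : Fin n → ℂ) (f : MvPolynomial (Fin n) ℂ) :
    eval v (Sh n f) = eval (fun i => v i + (((i : ℕ) : ℂ) - ((n : ℂ) - 1))) f := by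
  rw [Sh, eval_aeval_fam]
  have hvec : (fun i : Fin n => eval v (X i + C (((i : ℕ) : ℂ) - ((n : ℂ) - 1))))
      = fun i : Fin n => v i + (((i : ℕ) : ℂ) - ((n : ℂ) - 1)) := by
    funext i
    simp
  rw [hvec]

lemma eval_ShInv (n : ℕ) (v : Fin n → ℂ) (f : MvPolynomial (Fin n) ℂ) :
    eval v (ShInv n f) = eval (fun i => v i - (((i : ℕ) : ℂ) - ((n : ℂ) - 1))) f := by
  rw [ShInv, eval_aeval_fam]
  have hvec : (fun i : Fin n => eval v (X i - C (((i : ℕ) : ℂ) - ((n : ℂ) - 1))))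
      = fun i : Fin n => v i - (((i : ℕ) : ℂ) - ((n : ℂ) - 1)) := by
    funext i
    simp
  rw [hvec]

lemma shiftedSym_iff (n : ℕ) (f : MvPolynomial (Fin n) ℂ) :
    shiftedSym n f ↔ (Sh n f).IsSymmetric := by
  constructor
  · intro hf
    cases n with
    | zero =>
      intro σ
      have hcoe : ⇑σ = id := funext fun x => x.elim0
      rw [hcoe, rename_id, AlgHom.id_apply]
    | succ m =>
      have hP : ∀ σ ∈ Submonoid.closure
          (Set.range fun i : Fin m => Equiv.swap i.castSucc i.succ),
          ∀ v : Fin (m + 1) → ℂ, eval (v ∘ σ) (Sh (m + 1) f) = eval v (Sh (m + 1) f) := by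
        intro σ hσ
        induction hσ using Submonoid.closure_induction with
        | one =>
          intro v
          congr 1
        | mul σ τ hσ' hτ' ihσ ihτ =>
          intro v
          have hcomp : v ∘ ⇑(σ * τ) = (v ∘ ⇑σ) ∘ ⇑τ := by
            funext x
            simp [Equiv.Perm.mul_apply]
          rw [hcomp, ihτ (v ∘ ⇑σ), ihσ v]
        | mem σ hσ' =>
          obtain ⟨i, rfl⟩ := hσ'
          intro v
          rw [eval_Sh, eval_Sh]
          set a : Fin (m + 1) := i.castSucc with ha
          have hlt : (a : ℕ) + 1 < m + 1 := by
            have h2 := i.isLt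
            simp only [ha, Fin.coe_castSucc]
            omega
          have hb : (⟨(a : ℕ) + 1, hlt⟩ : Fin (m + 1)) = i.succ := by
            apply Fin.ext
            simp [ha]
          have := hf (fun j => v j + (((j : ℕ) : ℂ) - (((m + 1 : ℕ) : ℂ) - 1))) a hlt
          rw [this]
          congr 1
          congr 1
          funext j
          rcases eq_or_ne j a with rfl | hja
          · rw [if_pos rfl]
            have hsw : (Equiv.swap a i.succ) a = i.succ := Equiv.swap_apply_left _ _
            simp only [Function.comp_apply, ← ha, hsw, hb]
            push_cast [ha, Fin.val_succ, Fin.coe_castSucc]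
            ring
          · rcases eq_or_ne j i.succ with rfl | hjb
            · rw [if_neg hja, hb, if_pos rfl]
              have hsw : (Equiv.swap a i.succ) i.succ = a := Equiv.swap_apply_right _ _
              simp only [Function.comp_apply, ← ha, hsw]
              push_cast [ha, Fin.val_succ, Fin.coe_castSucc]
              ring
            · rw [if_neg hja, hb, if_neg hjb]
              have hsw : (Equiv.swap a i.succ) j = j :=
                Equiv.swap_apply_of_ne_of_ne hja hjb
              simp only [Function.comp_apply, ← ha, hsw]
      intro σ
      have hσ : σ ∈ Submonoid.closure
          (Set.range fun i : Fin m => Equiv.swap i.castSucc i.succ) := by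
        rw [Equiv.Perm.mclosure_swap_castSucc_succ]
        trivial
      apply MvPolynomial.funext
      intro v
      rw [eval_rename]
      exact hP σ hσ v
  · intro hsym x i h
    set b : Fin n := ⟨(i : ℕ) + 1, h⟩ with hb
    have hib : i ≠ b := by
      intro he
      have := congrArg Fin.val he
      simp [hb] at this
    conv_lhs => rw [← ShInv_Sh n f]
    conv_rhs => rw [← ShInv_Sh n f]
    rw [eval_ShInv, eval_ShInv]
    have hren := hsym (Equiv.swap i b)
    conv_lhs => rw [← hren]
    rw [eval_rename]
    congr 1
    congr 1
    funext j
    simp only [Function.comp_apply]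
    have hvb : ((b : ℕ) : ℂ) = ((i : ℕ) : ℂ) + 1 := by
      have : (b : ℕ) = (i : ℕ) + 1 := rfl
      rw [this]; push_cast; ring
    rcases eq_or_ne j i with hji | hji
    · rw [hji, Equiv.swap_apply_left, if_pos rfl, hvb]
      ring
    · rcases eq_or_ne j b with hjb | hjb
      · rw [hjb, Equiv.swap_apply_right, if_neg (Ne.symm hib), if_pos rfl, hvb]
        ring
      · rw [Equiv.swap_apply_of_ne_of_ne hji hjb, if_neg hji, if_neg hjb]

/-! ### triangular change of variables -/

noncomputable def Xd (n j : ℕ) : MvPolynomial (Fin n) ℂ :=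
  if h : j < n then X ⟨j, h⟩ else 0

noncomputable def qpoly (n : ℕ) : ℕ → MvPolynomial (Fin n) ℂ
  | k =>
    (if h : k < n then X ⟨k, h⟩ else 0) - C (Dc n (k + 1) 0)
      - ∑ j ∈ (Finset.range k).attach,
          Dc n (k + 1) (j.1 + 1) • qpoly n j.1
  termination_by k => k
  decreasing_by exact Finset.mem_range.mp j.2

lemma qpoly_eq (n k : ℕ) : qpoly n k = Xd n k - C (Dc n (k + 1) 0)
    - ∑ j ∈ Finset.range k, Dc n (k + 1) (j + 1) • qpoly n j := by
  rw [qpoly, Xd]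
  congr 1
  exact Finset.sum_attach _ (fun j => Dc n (k + 1) (j + 1) • qpoly n j)

noncomputable def wpoly (n : ℕ) (k : Fin n) : MvPolynomial (Fin n) ℂ :=
  C (Dc n ((k : ℕ) + 1) 0)
    + ∑ j ∈ Finset.range ((k : ℕ) + 1), Dc n ((k : ℕ) + 1) (j + 1) • Xd n j

lemma psi_w (n : ℕ) (k : Fin n) :
    aeval (fun m : Fin n => qpoly n (m : ℕ)) (wpoly n k) = X k := by
  rw [wpoly, map_add, map_sum, aeval_C, algebraMap_eq]
  have hterm : ∀ j ∈ Finset.range ((k : ℕ) + 1),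
      aeval (fun m : Fin n => qpoly n (m : ℕ)) (Dc n ((k : ℕ) + 1) (j + 1) • Xd n j)
        = Dc n ((k : ℕ) + 1) (j + 1) • qpoly n j := by
    intro j hj
    rw [Finset.mem_range] at hj
    have hjn : j < n := lt_of_lt_of_le hj k.isLt
    rw [map_smul, Xd, dif_pos hjn, aeval_X]
  rw [Finset.sum_congr rfl hterm, Finset.sum_range_succ, Dc_self, one_smul, qpoly_eq,
    Xd, dif_pos k.isLt, Fin.eta]
  abel

lemma a_w (n : ℕ) (k : Fin n) :
    aeval (fun m : Fin n => esymm (Fin n) ℂ ((m : ℕ) + 1)) (wpoly n k)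
      = Sh n (estarP n ((k : ℕ) + 1)) := by
  rw [Sh_estarP n ((k : ℕ) + 1) k.isLt]
  rw [wpoly, map_add, map_sum, aeval_C, algebraMap_eq]
  have hterm : ∀ j ∈ Finset.range ((k : ℕ) + 1),
      aeval (fun m : Fin n => esymm (Fin n) ℂ ((m : ℕ) + 1)) (Dc n ((k : ℕ) + 1) (j + 1) • Xd n j)
        = Dc n ((k : ℕ) + 1) (j + 1) • esymm (Fin n) ℂ (j + 1) := by
    intro j hj
    rw [Finset.mem_range] at hj
    have hjn : j < n := lt_of_lt_of_le hj k.isLt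
    rw [map_smul, Xd, dif_pos hjn, aeval_X]
  rw [Finset.sum_congr rfl hterm]
  rw [show (k : ℕ) + 1 + 1 = (k : ℕ) + 2 from rfl] at *
  rw [show ((k : ℕ) + 2) = ((k : ℕ) + 1) + 1 from rfl,
    Finset.sum_range_succ' (fun m => Dc n ((k : ℕ) + 1) m • esymm (Fin n) ℂ m) ((k : ℕ) + 1)]
  rw [esymm_zero, MvPolynomial.smul_eq_C_mul, mul_one]
  abel

/-- The polynomials `e*_1,…,e*_n` are algebraically independent over `ℂ` and generate
the algebra `Λ*(n)` of shifted symmetric polynomials. -/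
theorem stmt11 (n : ℕ) (hn : 1 ≤ n) :
    AlgebraicIndependent ℂ (fun k : Fin n => estarP n ((k : ℕ) + 1))
    ∧ ∀ f : MvPolynomial (Fin n) ℂ,
        shiftedSym n f ↔
          f ∈ Algebra.adjoin ℂ (Set.range fun k : Fin n => estarP n ((k : ℕ) + 1)) := by
  classical
  have key : ∀ k : Fin n, Sh n (estarP n ((k : ℕ) + 1))
      = ∑ j ∈ Finset.range ((k : ℕ) + 1 + 1), Dc n ((k : ℕ) + 1) j • esymm (Fin n) ℂ j :=
    fun k => Sh_estarP n ((k : ℕ) + 1) k.isLt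
  -- every elementary symmetric polynomial lies in the adjoin of the shifted `estarP`s
  have esymm_mem : ∀ j, j ≤ n →
      esymm (Fin n) ℂ j ∈ Algebra.adjoin ℂ
        (Set.range fun k : Fin n => Sh n (estarP n ((k : ℕ) + 1))) := by
    intro j
    induction j using Nat.strong_induction_on with
    | _ j ih =>
      intro hj
      match j with
      | 0 =>
        rw [esymm_zero]
        exact Subalgebra.one_mem _
      | j + 1 =>
        have hjn : j < n := by omega
        have hk := key ⟨j, hjn⟩
        rw [show ((⟨j, hjn⟩ : Fin n) : ℕ) = j from rfl] at hk
        rw [Finset.sum_range_succ, Dc_self, one_smul] at hk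
        have heq : esymm (Fin n) ℂ (j + 1)
            = Sh n (estarP n (j + 1))
              - ∑ m ∈ Finset.range (j + 1), Dc n (j + 1) m • esymm (Fin n) ℂ m := by
          rw [hk]; ring
        rw [heq]
        refine Subalgebra.sub_mem _ (Algebra.subset_adjoin ⟨⟨j, hjn⟩, rfl⟩)
          (Subalgebra.sum_mem _ ?_)
        intro m hm
        rw [Finset.mem_range] at hm
        exact Subalgebra.smul_mem _ (ih m (by omega) (by omega)) _
  -- the adjoin of the shifted family is contained in the symmetric subalgebra
  have hle : Algebra.adjoin ℂ (Set.range fun k : Fin n => Sh n (estarP n ((k : ℕ) + 1)))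
      ≤ symmetricSubalgebra (Fin n) ℂ := by
    rw [Algebra.adjoin_le_iff]
    rintro _ ⟨k, rfl⟩
    rw [SetLike.mem_coe]
    beta_reduce
    rw [key k]
    refine Subalgebra.sum_mem _ fun m _ => Subalgebra.smul_mem _ ?_ _
    rw [mem_symmetricSubalgebra]
    exact esymm_isSymmetric _ _ _
  -- conversely, every symmetric polynomial is in the adjoin of the shifted family
  have hge : ∀ g : MvPolynomial (Fin n) ℂ, g.IsSymmetric →
      g ∈ Algebra.adjoin ℂ (Set.range fun k : Fin n => Sh n (estarP n ((k : ℕ) + 1))) := by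
    intro g hg
    obtain ⟨p, hp⟩ := esymmAlgHom_fin_surjective ℂ (le_refl n)
      ⟨g, (mem_symmetricSubalgebra g).mpr hg⟩
    have hg' : g = aeval (fun i : Fin n => esymm (Fin n) ℂ ((i : ℕ) + 1)) p := by
      have h2 := congrArg Subtype.val hp
      rw [esymmAlgHom_apply] at h2
      exact h2.symm
    have hmem : g ∈ Algebra.adjoin ℂ
        (Set.range fun i : Fin n => esymm (Fin n) ℂ ((i : ℕ) + 1)) := by
      rw [hg', Algebra.adjoin_range_eq_range_aeval]
      exact ⟨p, rfl⟩
    refine Algebra.adjoin_le ?_ hmem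
    rintro _ ⟨k, rfl⟩
    exact esymm_mem ((k : ℕ) + 1) k.isLt
  -- transfer through the (injective) shift
  have hShinj : Function.Injective (Sh n) := by
    intro p q hpq
    have h2 := congrArg (ShInv n) hpq
    rwa [ShInv_Sh, ShInv_Sh] at h2
  have hmap : ∀ f : MvPolynomial (Fin n) ℂ,
      (f ∈ Algebra.adjoin ℂ (Set.range fun k : Fin n => estarP n ((k : ℕ) + 1)) ↔
        Sh n f ∈ Algebra.adjoin ℂ
          (Set.range fun k : Fin n => Sh n (estarP n ((k : ℕ) + 1)))) := by
    intro f
    have him : Algebra.adjoin ℂ (Set.range fun k : Fin n => Sh n (estarP n ((k : ℕ) + 1)))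
        = (Algebra.adjoin ℂ
            (Set.range fun k : Fin n => estarP n ((k : ℕ) + 1))).map (Sh n) := by
      rw [AlgHom.map_adjoin]
      congr 1
      rw [show (fun k : Fin n => Sh n (estarP n ((k : ℕ) + 1)))
        = (Sh n) ∘ (fun k : Fin n => estarP n ((k : ℕ) + 1)) from rfl, Set.range_comp]
    constructor
    · intro hf
      rw [him]
      exact Subalgebra.mem_map.mpr ⟨f, hf, rfl⟩
    · intro hf
      rw [him] at hf
      obtain ⟨f', hf', he⟩ := Subalgebra.mem_map.mp hf
      rwa [← hShinj he]
  constructor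
  · -- algebraic independence
    rw [algebraicIndependent_iff_injective_aeval]
    have hb_eq : (aeval (fun k : Fin n => estarP n ((k : ℕ) + 1)) :
          MvPolynomial (Fin n) ℂ →ₐ[ℂ] MvPolynomial (Fin n) ℂ)
        = (ShInv n).comp (aeval (fun k : Fin n => Sh n (estarP n ((k : ℕ) + 1)))) := by
      apply MvPolynomial.algHom_ext
      intro k
      rw [aeval_X, AlgHom.comp_apply, aeval_X, ShInv_Sh]
    rw [hb_eq, AlgHom.coe_comp]
    apply Function.Injective.comp
    · intro p q hpq
      have h2 := congrArg (Sh n) hpq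
      rwa [Sh_ShInv, Sh_ShInv] at h2
    · have hfactor : (aeval (fun k : Fin n => Sh n (estarP n ((k : ℕ) + 1))) :
            MvPolynomial (Fin n) ℂ →ₐ[ℂ] MvPolynomial (Fin n) ℂ)
          = (aeval (fun m : Fin n => esymm (Fin n) ℂ ((m : ℕ) + 1))).comp (aeval (wpoly n)) := by
        apply MvPolynomial.algHom_ext
        intro k
        rw [aeval_X, AlgHom.comp_apply, aeval_X, a_w]
      rw [hfactor, AlgHom.coe_comp]
      apply Function.Injective.comp
      · -- aeval of the elementary symmetric polynomials is injective
        intro p q hpq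
        apply esymmAlgHom_fin_injective ℂ (le_refl n)
        apply Subtype.val_injective
        rw [esymmAlgHom_apply, esymmAlgHom_apply]
        exact hpq
      · -- aeval (wpoly n) is injective since it has a left inverse
        have hcomp : (aeval (fun m : Fin n => qpoly n (m : ℕ))).comp
            (aeval (wpoly n) : MvPolynomial (Fin n) ℂ →ₐ[ℂ] MvPolynomial (Fin n) ℂ)
            = AlgHom.id ℂ _ := by
          apply MvPolynomial.algHom_ext
          intro k
          rw [AlgHom.comp_apply, aeval_X, psi_w, AlgHom.id_apply]
        intro p q hpq
        have h2 := congrArg (aeval (fun m : Fin n => qpoly n (m : ℕ))) hpq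
        rw [← AlgHom.comp_apply, ← AlgHom.comp_apply, hcomp, AlgHom.id_apply,
          AlgHom.id_apply] at h2
        exact h2
  · -- generation
    intro f
    rw [shiftedSym_iff, hmap f]
    constructor
    · intro h
      exact hge _ h
    · intro h
      rw [← mem_symmetricSubalgebra]
      exact hle h
end
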